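/- arXiv:1304.6770 — 10 statements merged into one kernel-verified Lean document; each statement's English description precedes it below -/
import Mathlib

section
/- Let K be a field, let f be a monic polynomial in K[X], and let g be a monic polynomial that is a greatest common divisor of f and its derivative f' (i.e. g divides f, g divides f', and every common divisor of f and f' divides g). If h ∈ K[X] satisfies f = h·g, then h is separable. -/
open Polynomial

theorem aux_deg_not_dvd {K : Type*} [Field K] {q : Polynomial K} (hq : Irreducible q)
    (hq' : derivative q ≠ 0) : ¬ q ∣ derivative q := by
  intro hdvd
  have := Polynomial.natDegree_le_of_dvd hdvd hq'
  have h2 : (derivative q).natDegree < q.natDegree :=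
    Polynomial.natDegree_derivative_lt (fun h0 => by
      simp [h0, Polynomial.derivative_C] at hq'
      · exact hq' (by simpa using congrArg derivative (Polynomial.eq_C_of_natDegree_eq_zero h0)))
  omega

/-- If `f` is monic, `g` is a monic gcd of `f` and its derivative `f'`, and `f = h·g`,
then `h` is separable. -/
theorem statement1 {K : Type*} [Field K] (f g h : Polynomial K)
    (hf : f.Monic) (hg : g.Monic)
    (hgf : g ∣ f) (hgf' : g ∣ derivative f)
    (hgcd : ∀ c : Polynomial K, c ∣ f → c ∣ derivative f → c ∣ g)
    (hfhg : f = h * g) :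
    h.Separable := by
  have hf0 : f ≠ 0 := hf.ne_zero
  have hg0 : g ≠ 0 := hg.ne_zero
  have hh0 : h ≠ 0 := fun h0 => hf0 (by simp [hfhg, h0])
  by_cases hd0 : derivative f = 0
  · -- then g = f and h = 1
    have hfg : f ∣ g := hgcd f dvd_rfl (by simp [hd0])
    have : g = f := Polynomial.eq_of_monic_of_associated hg hf (associated_of_dvd_dvd hgf hfg)
    rw [this] at hfhg
    have h1 : h = 1 := by
      nth_rewrite 1 [show f = 1 * f from (one_mul f).symm] at hfhg
      exact (mul_right_cancel₀ hf0 hfhg.symm)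
    rw [h1]; exact separable_one
  rw [Polynomial.separable_def]
  by_contra hncop
  classical
  -- get a common irreducible factor of h and h'
  have hgcdu : ¬ IsUnit (EuclideanDomain.gcd h (derivative h)) := by
    intro hu
    exact hncop (EuclideanDomain.gcd_isUnit_iff.mp hu)
  have hgcd0 : EuclideanDomain.gcd h (derivative h) ≠ 0 := fun h0 =>
    hh0 (EuclideanDomain.gcd_eq_zero_iff.mp h0).1
  obtain ⟨q, hq, hqd⟩ := WfDvdMonoid.exists_irreducible_factor hgcdu hgcd0
  have hqh : q ∣ h := hqd.trans (EuclideanDomain.gcd_dvd_left _ _)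
  have hqh' : q ∣ derivative h := hqd.trans (EuclideanDomain.gcd_dvd_right _ _)
  have hqp : Prime q := hq.prime
  -- factor out maximal powers of q
  obtain ⟨s, v, hqv, hhv⟩ := WfDvdMonoid.max_power_factor hh0 hq
  obtain ⟨t, w, hqw, hgw⟩ := WfDvdMonoid.max_power_factor hg0 hq
  have hs1 : 1 ≤ s := by
    rcases Nat.eq_zero_or_pos s with h0 | h1
    · exfalso; apply hqv
      have := hqh
      rw [hhv, h0, pow_zero, one_mul] at this
      exact this
    · exact h1
  have hfvw : f = q ^ (s + t) * (v * w) := by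
    rw [hfhg, hhv, hgw]; ring
  -- derivative of f
  have hdf : derivative f = q ^ (s + t - 1) *
      ((C ((s + t : ℕ) : K) * derivative q) * (v * w) + q * derivative (v * w)) := by
    obtain ⟨m, hm⟩ : ∃ m, s + t = m + 1 := ⟨s + t - 1, by omega⟩
    rw [hfvw, hm, derivative_mul, derivative_pow]
    simp only [Nat.add_sub_cancel]
    ring
  by_cases hcq : (C ((s + t : ℕ) : K) * derivative q) = 0
  · -- then q^(s+t) ∣ f', so q^(s+t) ∣ g, contradiction with q ∤ w
    have hdvd : q ^ (s + t) ∣ derivative f := by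
      rw [hdf, hcq, zero_mul, zero_add]
      have : q ^ (s + t) = q ^ (s + t - 1) * q := by
        rw [← pow_succ]; congr 1; omega
      rw [this]
      exact mul_dvd_mul_left _ (Dvd.intro _ rfl)
    have hdvdg : q ^ (s + t) ∣ g := hgcd _ (hfvw ▸ Dvd.intro _ rfl) hdvd
    rw [hgw] at hdvdg
    have : q ^ s ∣ w := by
      have h2 : q ^ t * q ^ s ∣ q ^ t * w := by
        rw [← pow_add]
        rw [show t + s = s + t from by omega]
        exact hdvdg
      exact (mul_dvd_mul_iff_left (pow_ne_zero t hqp.ne_zero)).mp h2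
    exact hqw (dvd_trans (dvd_pow_self q (by omega : s ≠ 0)) this)
  · -- C(s+t)·q' ≠ 0, so q' ≠ 0 and (s+t : K) ≠ 0
    have hq'0 : derivative q ≠ 0 := fun h0 => hcq (by rw [h0, mul_zero])
    have hqnq' : ¬ q ∣ derivative q := aux_deg_not_dvd hq hq'0
    have hcu : IsUnit (C ((s + t : ℕ) : K)) := by
      apply Polynomial.isUnit_C.mpr
      apply isUnit_iff_ne_zero.mpr
      intro h0; exact hcq (by rw [h0, map_zero, zero_mul])
    -- q does not divide the second factor of f'
    have hqnd : ¬ q ∣ ((C ((s + t : ℕ) : K) * derivative q) * (v * w) + q * derivative (v * w)) := by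
      intro hdvd
      have : q ∣ (C ((s + t : ℕ) : K) * derivative q) * (v * w) := by
        have := dvd_sub hdvd (Dvd.intro (derivative (v * w)) rfl)
        simpa using this
      rcases hqp.dvd_mul.mp this with h1 | h1
      · rcases hqp.dvd_mul.mp h1 with h2 | h2
        · exact hqp.not_unit (isUnit_of_dvd_unit h2 hcu)
        · exact hqnq' h2
      · rcases hqp.dvd_mul.mp h1 with h2 | h2
        · exact hqv h2
        · exact hqw h2
    -- q^(s+t-1) ∣ f and ∣ f', so q^(s+t-1) ∣ g, giving q^(s-1) ∣ w, hence s = 1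
    have hd1 : q ^ (s + t - 1) ∣ f := by
      rw [hfvw]
      exact dvd_mul_of_dvd_left (pow_dvd_pow q (by omega)) _
    have hd2 : q ^ (s + t - 1) ∣ derivative f := hdf ▸ Dvd.intro _ rfl
    have hdvdg : q ^ (s + t - 1) ∣ g := hgcd _ hd1 hd2
    rw [hgw] at hdvdg
    have hsw : q ^ (s - 1) ∣ w := by
      have h2 : q ^ t * q ^ (s - 1) ∣ q ^ t * w := by
        rw [← pow_add, show t + (s - 1) = s + t - 1 from by omega]
        exact hdvdg
      exact (mul_dvd_mul_iff_left (pow_ne_zero t hqp.ne_zero)).mp h2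
    have hs : s = 1 := by
      by_contra hs2
      exact hqw (dvd_trans (dvd_pow_self q (by omega : s - 1 ≠ 0)) hsw)
    -- now h = q * v, h' = q' v + q v', and q ∣ h' gives contradiction
    subst hs
    rw [hhv, pow_one] at hqh'
    rw [derivative_mul] at hqh'
    have : q ∣ derivative q * v := by
      have := dvd_sub hqh' (Dvd.intro (derivative v) rfl)
      simpa using this
    rcases hqp.dvd_mul.mp this with h1 | h1
    · exact hqnq' h1
    · exact hqv h1
end

section
/- (Hensel's Lemma over a commutative base ring.) Let R be a commutative ring and let F ∈ (R[[X]])[Y] be a monic polynomial of degree n > 1. Suppose we are given monic polynomials G₀, H₀ ∈ R[Y] of degrees r, s > 0 respectively with r + s = n, and polynomials G*, H* ∈ R[Y], such that the reduction of F modulo X equals G₀·H₀ and G₀·H* + H₀·G* = 1. Then there exist monic polynomials G, H ∈ (R[[X]])[Y] of degrees r and s respectively such that F = G·H, the reduction of G modulo X equals G₀, and the reduction of H modulo X equals H₀. -/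
/-!
Regard `F ∈ (R[[X]])[Y]` as the power series `f = ∑ fₖ Xᵏ` with coefficients `fₖ ∈ R[Y]`.
Comparing coefficients of `Xᵏ` in `g * h = f`, with `g₀ = G₀` and `h₀ = H₀`, asks at each
step `k > 0` for `H₀ gₖ + G₀ hₖ = Eₖ`, where `Eₖ = fₖ - ∑_{0<i<k} gᵢ hₖ₋ᵢ` is already known.
The Bézout identity gives a solution, and reducing `hₖ` modulo the monic `H₀` makes
`deg hₖ < deg H₀` and forces `deg gₖ < deg G₀`, since `deg Eₖ < deg G₀ + deg H₀` (as `F` is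
monic). These degree bounds make `g` and `h` come from monic polynomials over `R[[X]]` of the
same degrees as `G₀` and `H₀`.
-/

open Polynomial

section BezoutSolve

variable {R : Type*} [CommRing R] (G₀ H₀ Gstar Hstar : R[X])

noncomputable def bezoutSolve (E : R[X]) : R[X] × R[X] :=
  (Gstar * E + (Hstar * E /ₘ H₀) * G₀, Hstar * E %ₘ H₀)

variable {G₀ H₀ Gstar Hstar}

theorem bezoutSolve_spec (hbezout : G₀ * Hstar + H₀ * Gstar = 1) (E : R[X]) :
    H₀ * (bezoutSolve G₀ H₀ Gstar Hstar E).1 + G₀ * (bezoutSolve G₀ H₀ Gstar Hstar E).2 = E := by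
  have := modByMonic_add_div (Hstar * E) H₀
  simp only [bezoutSolve]
  linear_combination G₀ * this + E * hbezout

theorem degree_bezoutSolve_lt [Nontrivial R] (hG₀ : G₀.Monic) (hH₀ : H₀.Monic)
    (hbezout : G₀ * Hstar + H₀ * Gstar = 1) {E : R[X]} (hE : E.degree < (G₀ * H₀).degree) :
    (bezoutSolve G₀ H₀ Gstar Hstar E).1.degree < G₀.degree ∧
      (bezoutSolve G₀ H₀ Gstar Hstar E).2.degree < H₀.degree := by
  set g := (bezoutSolve G₀ H₀ Gstar Hstar E).1
  set h := (bezoutSolve G₀ H₀ Gstar Hstar E).2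
  have hh : h.degree < H₀.degree := degree_modByMonic_lt _ hH₀
  have hG₀h : (G₀ * h).degree < (G₀ * H₀).degree := by
    rw [hG₀.degree_mul_comm, hG₀.degree_mul_comm, hG₀.degree_mul, hG₀.degree_mul]
    exact WithBot.add_lt_add_right (degree_ne_bot.mpr hG₀.ne_zero) hh
  refine ⟨?_, hh⟩
  have hH₀g : H₀ * g = E - G₀ * h := by
    linear_combination bezoutSolve_spec hbezout E
  have := (degree_sub_le _ _).trans_lt (max_lt hE hG₀h)
  rw [← hH₀g, hH₀.degree_mul_comm, hH₀.degree_mul, hH₀.degree_mul] at this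
  exact (WithBot.add_lt_add_iff_right (degree_ne_bot.mpr hH₀.ne_zero)).mp this

end BezoutSolve

theorem Polynomial.degree_mul_lt_degree_mul {R : Type*} [CommRing R] [Nontrivial R]
    {p q G H : R[X]} (hH : H.Monic) (hp : p.degree < G.degree) (hq : q.degree < H.degree) :
    (p * q).degree < (G * H).degree := by
  rw [hH.degree_mul]
  calc (p * q).degree ≤ p.degree + q.degree := degree_mul_le p q
    _ ≤ p.degree + H.degree := by gcongr
    _ < G.degree + H.degree := WithBot.add_lt_add_right (degree_ne_bot.mpr hH.ne_zero) hp

open Finset in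
theorem Finset.Nat.sum_antidiagonal_succ_eq_add_add_sum_fin {M : Type*} [AddCommMonoid M]
    (u : ℕ → ℕ → M) (k : ℕ) :
    ∑ p ∈ antidiagonal (k + 1), u p.1 p.2 =
      u 0 (k + 1) + u (k + 1) 0 + ∑ i : Fin k, u (i + 1) (k - i) := by
  rw [Nat.sum_antidiagonal_succ, Nat.sum_antidiagonal_eq_sum_range_succ_mk, sum_range_succ,
    Nat.sub_self, Fin.sum_univ_eq_sum_range (fun i => u (i + 1) (k - i))]
  abel

section HenselCoeffs

open Finset

variable {R : Type*} [CommRing R] (G₀ H₀ Gstar Hstar : R[X]) (f : PowerSeries R[X])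

noncomputable def henselCoeffs : ℕ → R[X] × R[X]
  | 0 => (G₀, H₀)
  | k + 1 => bezoutSolve G₀ H₀ Gstar Hstar (PowerSeries.coeff (k + 1) f -
      ∑ i : Fin k, (henselCoeffs (i + 1)).1 * (henselCoeffs (k - i)).2)
  decreasing_by all_goals omega

variable {G₀ H₀ Gstar Hstar f}

theorem sum_antidiagonal_henselCoeffs (hbezout : G₀ * Hstar + H₀ * Gstar = 1)
    (hf0 : PowerSeries.coeff 0 f = G₀ * H₀) (k : ℕ) :
    ∑ p ∈ antidiagonal k, (henselCoeffs G₀ H₀ Gstar Hstar f p.1).1 *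
      (henselCoeffs G₀ H₀ Gstar Hstar f p.2).2 = PowerSeries.coeff k f := by
  cases k with
  | zero => simp [henselCoeffs, hf0]
  | succ k =>
    rw [Nat.sum_antidiagonal_succ_eq_add_add_sum_fin
      (fun a b => (henselCoeffs G₀ H₀ Gstar Hstar f a).1 * (henselCoeffs G₀ H₀ Gstar Hstar f b).2)]
    have := bezoutSolve_spec hbezout (PowerSeries.coeff (k + 1) f -
      ∑ i : Fin k, (henselCoeffs G₀ H₀ Gstar Hstar f (i + 1)).1 *
        (henselCoeffs G₀ H₀ Gstar Hstar f (k - i)).2)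
    rw [← henselCoeffs.eq_2] at this
    rw [henselCoeffs.eq_1]
    linear_combination this

theorem degree_henselCoeffs_lt [Nontrivial R] (hG₀ : G₀.Monic) (hH₀ : H₀.Monic)
    (hbezout : G₀ * Hstar + H₀ * Gstar = 1)
    (hf : ∀ k ≠ 0, (PowerSeries.coeff k f).degree < (G₀ * H₀).degree) {k : ℕ} (hk : k ≠ 0) :
    (henselCoeffs G₀ H₀ Gstar Hstar f k).1.degree < G₀.degree ∧
      (henselCoeffs G₀ H₀ Gstar Hstar f k).2.degree < H₀.degree := by
  induction k using Nat.strong_induction_on with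
  | _ k ih =>
  obtain ⟨k, rfl⟩ := Nat.exists_eq_succ_of_ne_zero hk
  rw [henselCoeffs]
  refine degree_bezoutSolve_lt hG₀ hH₀ hbezout
    ((degree_sub_le _ _).trans_lt (max_lt (hf _ hk) ?_))
  have hGH : ⊥ < (G₀ * H₀).degree :=
    bot_lt_iff_ne_bot.mpr (degree_ne_bot.mpr (hG₀.mul hH₀).ne_zero)
  refine (degree_sum_le _ _).trans_lt ((Finset.sup_lt_iff hGH).mpr fun i _ => ?_)
  exact degree_mul_lt_degree_mul hH₀ (ih _ (by omega) (by omega)).1 (ih _ (by omega) (by omega)).2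

theorem PowerSeries.exists_mul_eq_of_bezout [Nontrivial R] (hG₀ : G₀.Monic) (hH₀ : H₀.Monic)
    (hbezout : G₀ * Hstar + H₀ * Gstar = 1) (hf0 : coeff 0 f = G₀ * H₀)
    (hf : ∀ k ≠ 0, (coeff k f).degree < (G₀ * H₀).degree) :
    ∃ g h : PowerSeries R[X], g * h = f ∧ coeff 0 g = G₀ ∧ coeff 0 h = H₀ ∧
      (∀ k ≠ 0, (coeff k g).degree < G₀.degree) ∧ (∀ k ≠ 0, (coeff k h).degree < H₀.degree) := by
  refine ⟨mk fun k => (henselCoeffs G₀ H₀ Gstar Hstar f k).1,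
    mk fun k => (henselCoeffs G₀ H₀ Gstar Hstar f k).2, ?_, by simp [henselCoeffs.eq_1],
    by simp [henselCoeffs.eq_1], fun k hk => ?_, fun k hk => ?_⟩
  · refine PowerSeries.ext fun k => ?_
    rw [coeff_mul]
    simpa only [coeff_mk] using sum_antidiagonal_henselCoeffs hbezout hf0 k
  · simpa only [coeff_mk] using (degree_henselCoeffs_lt hG₀ hH₀ hbezout hf hk).1
  · simpa only [coeff_mk] using (degree_henselCoeffs_lt hG₀ hH₀ hbezout hf hk).2

end HenselCoeffs

section SwapPowerSeries

variable {R : Type*} [CommRing R]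

noncomputable def swapPowerSeries : (PowerSeries R)[X] →+* PowerSeries R[X] :=
  eval₂RingHom (PowerSeries.map C) (PowerSeries.C X)

theorem coeff_coeff_swapPowerSeries (P : (PowerSeries R)[X]) (k j : ℕ) :
    (PowerSeries.coeff k (swapPowerSeries P)).coeff j = PowerSeries.coeff k (P.coeff j) := by
  induction P using Polynomial.induction_on' with
  | add P Q hP hQ => simp [hP, hQ]
  | monomial i a =>
    simp [swapPowerSeries, ← map_pow, PowerSeries.coeff_mul_C, coeff_monomial,
      apply_ite (PowerSeries.coeff k), eq_comm]

theorem swapPowerSeries_injective : Function.Injective (swapPowerSeries (R := R)) := by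
  intro P Q h
  ext j k
  rw [← coeff_coeff_swapPowerSeries, ← coeff_coeff_swapPowerSeries, h]

theorem map_constantCoeff_eq_coeff_zero_swapPowerSeries (P : (PowerSeries R)[X]) :
    P.map PowerSeries.constantCoeff = PowerSeries.coeff 0 (swapPowerSeries P) := by
  ext j
  rw [coeff_map, coeff_coeff_swapPowerSeries, PowerSeries.coeff_zero_eq_constantCoeff_apply]

theorem Polynomial.Monic.degree_coeff_swapPowerSeries_lt {F : (PowerSeries R)[X]} (hF : F.Monic)
    {k : ℕ} (hk : k ≠ 0) : (PowerSeries.coeff k (swapPowerSeries F)).degree < F.natDegree := by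
  refine degree_lt_iff_coeff_zero _ _ |>.mpr fun m hm => ?_
  rw [coeff_coeff_swapPowerSeries]
  rcases hm.eq_or_lt with heq | hlt
  · rw [← heq, hF.coeff_natDegree, PowerSeries.coeff_one, if_neg hk]
  · rw [coeff_eq_zero_of_natDegree_lt hlt, map_zero]

theorem exists_monic_swapPowerSeries_eq [Nontrivial R] {g : PowerSeries R[X]} {G₀ : R[X]}
    (hG₀ : G₀.Monic) (hg0 : PowerSeries.coeff 0 g = G₀)
    (hg : ∀ k ≠ 0, (PowerSeries.coeff k g).degree < G₀.degree) :
    ∃ G : (PowerSeries R)[X], G.Monic ∧ G.natDegree = G₀.natDegree ∧ swapPowerSeries G = g := by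
  set r := G₀.natDegree
  set G : (PowerSeries R)[X] := ∑ j ∈ Finset.range (r + 1),
    monomial j (PowerSeries.mk fun k => (PowerSeries.coeff k g).coeff j)
  have hg_le : ∀ k, (PowerSeries.coeff k g).degree ≤ r := by
    intro k
    rcases eq_or_ne k 0 with rfl | hk
    · exact hg0 ▸ degree_le_natDegree
    · exact (hg k hk).le.trans_eq (degree_eq_natDegree hG₀.ne_zero)
  have hG : ∀ j, G.coeff j = PowerSeries.mk fun k => (PowerSeries.coeff k g).coeff j := by
    intro j
    simp only [G, finsetSum_coeff, coeff_monomial, Finset.sum_ite_eq', Finset.mem_range]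
    split_ifs with hj
    · rfl
    refine PowerSeries.ext fun k => ?_
    rw [PowerSeries.coeff_mk, map_zero]
    exact (coeff_eq_zero_of_degree_lt ((hg_le k).trans_lt (by exact_mod_cast not_lt.mp hj))).symm
  have hGr : G.coeff r = 1 := by
    ext k
    rw [hG, PowerSeries.coeff_mk, PowerSeries.coeff_one]
    split_ifs with hk
    · rw [hk, hg0, hG₀.coeff_natDegree]
    · exact coeff_eq_zero_of_degree_lt ((hg k hk).trans_eq (degree_eq_natDegree hG₀.ne_zero))
  have hGle : G.natDegree ≤ r :=
    natDegree_sum_le_of_forall_le _ _ fun j hj => (natDegree_monomial_le _).trans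
      (Nat.lt_succ_iff.mp (Finset.mem_range.mp hj))
  refine ⟨G, monic_of_natDegree_le_of_coeff_eq_one r hGle hGr,
    natDegree_eq_of_le_of_coeff_ne_zero hGle (by rw [hGr]; exact one_ne_zero), ?_⟩
  ext k j
  rw [coeff_coeff_swapPowerSeries, hG, PowerSeries.coeff_mk]

end SwapPowerSeries

theorem statement3_general {R : Type*} [CommRing R]
    (F : Polynomial (PowerSeries R)) (hFmonic : F.Monic)
    (r s : ℕ)
    (G₀ H₀ Gstar Hstar : Polynomial R)
    (hG₀monic : G₀.Monic) (hH₀monic : H₀.Monic)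
    (hG₀deg : G₀.natDegree = r) (hH₀deg : H₀.natDegree = s)
    (hF0 : F.map (PowerSeries.constantCoeff (R := R)) = G₀ * H₀)
    (hbezout : G₀ * Hstar + H₀ * Gstar = 1) :
    ∃ G H : Polynomial (PowerSeries R),
      G.Monic ∧ H.Monic ∧ G.natDegree = r ∧ H.natDegree = s ∧
      F = G * H ∧
      G.map (PowerSeries.constantCoeff (R := R)) = G₀ ∧
      H.map (PowerSeries.constantCoeff (R := R)) = H₀ := by
  rcases subsingleton_or_nontrivial R with hR | hR
  · subst hG₀deg hH₀deg
    exact ⟨0, 0, monic_of_subsingleton _, monic_of_subsingleton _,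
      by simp [Subsingleton.elim G₀ 0], by simp [Subsingleton.elim H₀ 0],
      Subsingleton.elim _ _, Subsingleton.elim _ _, Subsingleton.elim _ _⟩
  have hf0 : PowerSeries.coeff 0 (swapPowerSeries F) = G₀ * H₀ := by
    rw [← map_constantCoeff_eq_coeff_zero_swapPowerSeries, hF0]
  have hdeg : (G₀ * H₀).degree = F.natDegree := by
    rw [← hF0, hFmonic.degree_map, degree_eq_natDegree hFmonic.ne_zero]
  obtain ⟨g, h, hgh, hg0, hh0, hg, hh⟩ := PowerSeries.exists_mul_eq_of_bezout hG₀monic hH₀monic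
    hbezout hf0 fun k hk => hdeg ▸ hFmonic.degree_coeff_swapPowerSeries_lt hk
  obtain ⟨G, hGmonic, hGdeg, rfl⟩ := exists_monic_swapPowerSeries_eq hG₀monic hg0 hg
  obtain ⟨H, hHmonic, hHdeg, rfl⟩ := exists_monic_swapPowerSeries_eq hH₀monic hh0 hh
  refine ⟨G, H, hGmonic, hHmonic, hGdeg.trans hG₀deg, hHdeg.trans hH₀deg,
    swapPowerSeries_injective (by rw [map_mul, hgh]), ?_, ?_⟩
  · rw [map_constantCoeff_eq_coeff_zero_swapPowerSeries, hg0]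
  · rw [map_constantCoeff_eq_coeff_zero_swapPowerSeries, hh0]

/-- Hensel's Lemma over a commutative base ring: a factorization of the reduction of a
monic `F ∈ (R[[X]])[Y]` modulo `X` into comaximal monic factors of positive degrees lifts
to a factorization of `F`. -/
theorem statement3 {R : Type*} [CommRing R] (n : ℕ) (hn : 1 < n)
    (F : Polynomial (PowerSeries R)) (hFmonic : F.Monic) (hFdeg : F.natDegree = n)
    (r s : ℕ) (hr : 0 < r) (hs : 0 < s) (hrs : r + s = n)
    (G₀ H₀ Gstar Hstar : Polynomial R)
    (hG₀monic : G₀.Monic) (hH₀monic : H₀.Monic)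
    (hG₀deg : G₀.natDegree = r) (hH₀deg : H₀.natDegree = s)
    (hF0 : F.map (PowerSeries.constantCoeff (R := R)) = G₀ * H₀)
    (hbezout : G₀ * Hstar + H₀ * Gstar = 1) :
    ∃ G H : Polynomial (PowerSeries R),
      G.Monic ∧ H.Monic ∧ G.natDegree = r ∧ H.natDegree = s ∧
      F = G * H ∧
      G.map (PowerSeries.constantCoeff (R := R)) = G₀ ∧
      H.map (PowerSeries.constantCoeff (R := R)) = H₀ :=
  statement3_general F hFmonic r s G₀ H₀ Gstar Hstar hG₀monic hH₀monic hG₀deg hH₀deg hF0 hbezout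
end

section
/- (The field of fractional power series is separably algebraically closed.) Let K be an algebraically closed field of characteristic zero and let F ∈ (K((X)))[Y] be a monic separable polynomial of degree n ≥ 1. Then there exist a positive integer m and Laurent series η₁, …, η_n ∈ K((T)) such that the image of F under the coefficient-wise field homomorphism τ_m (sending X to T^m) equals the product ∏_{i=1}^n (Y − C(η_i)). -/
/-!
Newton–Puiseux. By strong induction on the degree it suffices to factor `F`, after some
substitution `X ↦ T^m` and a rescaling of its roots, into two monic factors of smaller positive
degree. A Tschirnhaus shift first kills the coefficient of `Y^(n-1)`. If `u / w` is the least
slope `ord aᵢ / (n - i)` of the Newton polygon, substituting `X ↦ T^w`, `Y ↦ T^u Y` and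
dividing by `T^(n u)` makes all coefficients power series and keeps a nonzero constant term in
some coefficient below the leading one. The reduction modulo `T` is then a monic polynomial over
`K` with vanishing coefficient of `Y^(n-1)` which is not `Y^n`; so it is not a power of a single
`Y - r` (here `char K = 0` is used), and it splits into two coprime monic factors over the
algebraically closed `K`. Hensel's lemma lifts this factorization to `K⟦T⟧[Y]`.
-/

/-- The field homomorphism `K((X)) → K((T))` sending `Σ aᵢ Xⁱ` to `Σ aᵢ T^(m·i)`,
i.e. substitution of `T^m` for `X`. -/
noncomputable def LaurentSeries.substPow (R : Type*) [CommRing R] (m : ℕ+) :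
    LaurentSeries R →+* LaurentSeries R :=
  HahnSeries.embDomainRingHom (AddMonoidHom.mulLeft (m : ℤ))
    (fun _ _ h => by
      simpa using mul_left_cancel₀ (a := (m : ℤ)) (by exact_mod_cast m.ne_zero) h)
    (fun _ _ => mul_le_mul_iff_of_pos_left (by exact_mod_cast m.pos))

open Polynomial

namespace Polynomial

section CommRing

variable {R : Type*} [CommRing R]

theorem Monic.nextCoeff_taylor {f : R[X]} (hf : f.Monic) (r : R) :
    (taylor r f).nextCoeff = f.nextCoeff + f.natDegree * r := by
  rcases Nat.eq_zero_or_pos f.natDegree with h | h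
  · simp [nextCoeff, h]
  rw [nextCoeff_of_natDegree_pos h, nextCoeff_of_natDegree_pos (by rwa [natDegree_taylor]),
    natDegree_taylor, taylor_coeff]
  have hD : (hasseDeriv (f.natDegree - 1) f).natDegree ≤ 1 :=
    (natDegree_hasseDeriv_le f _).trans (by omega)
  rw [eq_X_add_C_of_natDegree_le_one hD]
  simp only [eval_add, eval_mul, eval_C, eval_X, hasseDeriv_coeff, zero_add, Nat.choose_self,
    Nat.cast_one, one_mul]
  rw [show 1 + (f.natDegree - 1) = f.natDegree by omega, hf.coeff_natDegree,
    Nat.choose_symm (by omega), Nat.choose_one_right]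
  ring

theorem Splits.of_taylor {f : R[X]} {r : R} (h : (f.taylor r).Splits) : f.Splits := by
  simpa [taylor_taylor] using h.taylor (-r)

end CommRing

section Field

variable {K : Type*} [Field K]

theorem degree_mul_lt_degree_mul_s6 {x y p q : K[X]} (hx : x.degree < p.degree)
    (hy : y.degree < q.degree) : (x * y).degree < (p * q).degree := by
  rcases eq_or_ne y 0 with rfl | hy0
  · rw [mul_zero, degree_zero, bot_lt_iff_ne_bot, Ne, degree_eq_bot, mul_eq_zero, not_or]
    exact ⟨ne_zero_of_degree_gt hx, ne_zero_of_degree_gt hy⟩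
  rw [degree_mul, degree_mul]
  exact WithBot.add_lt_add_of_lt_of_le (degree_eq_bot.not.mpr hy0) hx hy.le

theorem degree_lt_of_mul_add_mul_eq {p q a b r : K[X]} (hp : p.Monic) (hq : q.Monic)
    (ha : a.degree < p.degree) (hr : r.degree < (p * q).degree) (h : q * a + p * b = r) :
    b.degree < q.degree := by
  have hqa : (q * a).degree < (p * q).degree := by
    rw [mul_comm q, hq.degree_mul, hq.degree_mul]
    exact WithBot.add_lt_add_right (by simp [hq.ne_zero]) ha
  have hpb : (p * b).degree < (p * q).degree := by
    rw [show p * b = r - q * a by rw [← h]; ring]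
    exact (degree_sub_le _ _).trans_lt (max_lt hr hqa)
  rw [mul_comm p, mul_comm p, hp.degree_mul, hp.degree_mul] at hpb
  exact (WithBot.add_lt_add_iff_right (by simp [hp.ne_zero])).mp hpb

theorem Splits.of_scaleRoots {p : K[X]} {c : K} (hc : c ≠ 0) (h : (p.scaleRoots c).Splits) :
    p.Splits := by
  simpa [← scaleRoots_mul, mul_inv_cancel₀ hc, scaleRoots_one] using h.scaleRoots c⁻¹

theorem Monic.exists_eq_prod_X_sub_C {f : K[X]} (hf : f.Monic) (hs : f.Splits) {n : ℕ}
    (hn : f.natDegree = n) : ∃ η : Fin n → K, f = ∏ i, (X - C (η i)) := by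
  have hlen : f.roots.toList.length = n := by
    rw [Multiset.length_toList, ← hn, splits_iff_card_roots.mp hs]
  subst hlen
  refine ⟨fun i => f.roots.toList[(i : ℕ)], ?_⟩
  rw [Fin.prod_univ_fun_getElem f.roots.toList (fun a => X - C a), ← Multiset.prod_coe,
    ← Multiset.map_coe, Multiset.coe_toList]
  exact hs.eq_prod_roots_of_monic hf

theorem exists_isCoprime_mul_eq_of_nextCoeff_eq_zero [IsAlgClosed K] [CharZero K] {p : K[X]}
    (hp : p.Monic) (hnext : p.nextCoeff = 0) (hX : p ≠ X ^ p.natDegree) :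
    ∃ p₁ p₂ : K[X], p₁.Monic ∧ p₂.Monic ∧ IsCoprime p₁ p₂ ∧ p₁ * p₂ = p ∧
      0 < p₁.natDegree ∧ 0 < p₂.natDegree := by
  have hdeg : p.degree ≠ 0 := fun h => by
    have h0 : p.natDegree = 0 := natDegree_eq_of_degree_eq_some h
    exact hX (by rw [h0, pow_zero]; exact hp.natDegree_eq_zero.mp h0)
  obtain ⟨r, hr⟩ := IsAlgClosed.exists_root p hdeg
  set k := p.rootMultiplicity r
  have hk : 0 < k := (rootMultiplicity_pos hp.ne_zero).mpr hr
  have hmul : (X - C r) ^ k * (p /ₘ (X - C r) ^ k) = p :=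
    pow_mul_divByMonic_rootMultiplicity_eq p r
  have hq : (p /ₘ (X - C r) ^ k).Monic :=
    ((monic_X_sub_C r).pow k).of_mul_monic_left (by rwa [hmul])
  refine ⟨(X - C r) ^ k, p /ₘ (X - C r) ^ k, (monic_X_sub_C r).pow k, hq, ?_, hmul,
    by rwa [natDegree_pow, natDegree_X_sub_C, mul_one], ?_⟩
  · refine IsCoprime.pow_left ((irreducible_X_sub_C r).coprime_iff_not_dvd.mpr fun hdvd => ?_)
    exact eval_divByMonic_pow_rootMultiplicity_ne_zero r hp.ne_zero (dvd_iff_isRoot.mp hdvd)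
  · by_contra! hq0
    have hpk : p = (X - C r) ^ k := by
      rw [← hmul, hq.natDegree_eq_zero.mp (by omega), mul_one]
    have hr0 : r = 0 := by
      have := hnext
      rw [hpk, (monic_X_sub_C r).nextCoeff_pow, nextCoeff_X_sub_C, nsmul_eq_mul,
        mul_eq_zero, neg_eq_zero, Nat.cast_eq_zero] at this
      exact this.resolve_left hk.ne'
    apply hX
    rw [hpk, hr0, map_zero, sub_zero, natDegree_X_pow]

end Field

end Polynomial

namespace PowerSeries

variable {K : Type*} [Field K]

/-- The `T^j`-coefficients `(aⱼ, bⱼ)` of the two Hensel factors of `Φ`, given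
`u p + v q = 1`: `(aⱼ₊₁, bⱼ₊₁)` solves `q a + p b = r` with `deg a < deg p`, where `r` is what
the earlier layers leave of the `T^(j+1)`-coefficient of `Φ`. -/
noncomputable def henselLayers (Φ : PowerSeries K[X]) (p q u v : K[X]) : ℕ → K[X] × K[X]
  | 0 => (p, q)
  | j + 1 =>
    let r := coeff (j + 1) Φ -
      ∑ i : Fin j, (henselLayers Φ p q u v (i + 1)).1 * (henselLayers Φ p q u v (j - i)).2
    ((v * r) %ₘ p, r * u + q * (v * r /ₘ p))

variable (Φ : PowerSeries K[X]) (p q : K[X]) {u v : K[X]}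

theorem mul_henselLayers_add_mul (huv : u * p + v * q = 1) (j : ℕ) :
    q * (henselLayers Φ p q u v (j + 1)).1 + p * (henselLayers Φ p q u v (j + 1)).2 =
      coeff (j + 1) Φ - ∑ i ∈ Finset.range j,
        (henselLayers Φ p q u v (i + 1)).1 * (henselLayers Φ p q u v (j - i)).2 := by
  rw [henselLayers.eq_2, Fin.sum_univ_eq_sum_range (fun i =>
    (henselLayers Φ p q u v (i + 1)).1 * (henselLayers Φ p q u v (j - i)).2)]
  generalize coeff (j + 1) Φ - ∑ i ∈ Finset.range j,
    (henselLayers Φ p q u v (i + 1)).1 * (henselLayers Φ p q u v (j - i)).2 = r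
  linear_combination r * huv + q * modByMonic_add_div (v * r) p

theorem mk_henselLayers_mul_mk (huv : u * p + v * q = 1) (h0 : coeff 0 Φ = p * q) :
    mk (fun j => (henselLayers Φ p q u v j).1) * mk (fun j => (henselLayers Φ p q u v j).2) =
      Φ := by
  ext j : 1
  rw [coeff_mul, Finset.Nat.sum_antidiagonal_eq_sum_range_succ_mk]
  simp only [coeff_mk]
  cases j with
  | zero => simp [henselLayers, h0]
  | succ j =>
    rw [Finset.sum_range_succ', Finset.sum_range_succ]
    simp only [Nat.succ_sub_succ_eq_sub, Nat.sub_self, Nat.sub_zero, henselLayers.eq_1]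
    linear_combination mul_henselLayers_add_mul Φ p q huv j

theorem degree_henselLayers_lt (hp : p.Monic) (hq : q.Monic) (huv : u * p + v * q = 1)
    (hdeg : ∀ j, 0 < j → (coeff j Φ).degree < (p * q).degree) (j : ℕ) (hj : 0 < j) :
    (henselLayers Φ p q u v j).1.degree < p.degree ∧
      (henselLayers Φ p q u v j).2.degree < q.degree := by
  induction j using Nat.strong_induction_on with
  | _ j ih =>
  obtain ⟨j, rfl⟩ := Nat.exists_eq_add_one_of_ne_zero hj.ne'
  have hr : (coeff (j + 1) Φ - ∑ i ∈ Finset.range j,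
      (henselLayers Φ p q u v (i + 1)).1 * (henselLayers Φ p q u v (j - i)).2).degree <
        (p * q).degree := by
    refine (degree_sub_le _ _).trans_lt (max_lt (hdeg _ j.succ_pos) ?_)
    refine (degree_sum_le _ _).trans_lt ((Finset.sup_lt_iff (bot_lt_iff_ne_bot.mpr ?_)).mpr ?_)
    · simp [hp.ne_zero, hq.ne_zero]
    intro i hi
    have hi := Finset.mem_range.mp hi
    exact degree_mul_lt_degree_mul_s6 (ih (i + 1) (by omega) (by omega)).1
      (ih (j - i) (by omega) (by omega)).2
  have ha : (henselLayers Φ p q u v (j + 1)).1.degree < p.degree := by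
    rw [henselLayers.eq_2]
    exact degree_modByMonic_lt _ hp
  exact ⟨ha, degree_lt_of_mul_add_mul_eq hp hq ha hr (mul_henselLayers_add_mul Φ p q huv j)⟩

theorem exists_mul_eq_of_isCoprime {Φ : PowerSeries K[X]} {p q : K[X]} (hp : p.Monic)
    (hq : q.Monic) (hpq : IsCoprime p q) (h0 : coeff 0 Φ = p * q)
    (hdeg : ∀ j, 0 < j → (coeff j Φ).degree < (p * q).degree) :
    ∃ A B : PowerSeries K[X], coeff 0 A = p ∧ coeff 0 B = q ∧
      (∀ j, 0 < j → (coeff j A).degree < p.degree ∧ (coeff j B).degree < q.degree) ∧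
      A * B = Φ := by
  obtain ⟨u, v, huv⟩ := hpq
  refine ⟨mk fun j => (henselLayers Φ p q u v j).1, mk fun j => (henselLayers Φ p q u v j).2,
    by simp [henselLayers], by simp [henselLayers],
    fun j hj => by simpa using degree_henselLayers_lt Φ p q hp hq huv hdeg j hj,
    mk_henselLayers_mul_mk Φ p q huv h0⟩

end PowerSeries

namespace Polynomial

variable {R : Type*} [CommRing R]

/-- Regards `Σ_d Q_d(T) Y^d ∈ R⟦T⟧[Y]` as the power series `Σ_j (Σ_d [T^j]Q_d · Y^d) T^j`
with coefficients in `R[Y]`. -/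
noncomputable def powerSeriesSwap : (PowerSeries R)[X] →+* PowerSeries R[X] :=
  eval₂RingHom (PowerSeries.map C) (PowerSeries.C X)

theorem coeff_coeff_powerSeriesSwap (Q : (PowerSeries R)[X]) (j d : ℕ) :
    (PowerSeries.coeff j (powerSeriesSwap Q)).coeff d = PowerSeries.coeff j (Q.coeff d) := by
  induction Q using Polynomial.induction_on' with
  | add Q Q' hQ hQ' => simp [hQ, hQ']
  | monomial n c =>
    rcases eq_or_ne n d with rfl | hnd
    · simp [powerSeriesSwap, ← map_pow, PowerSeries.coeff_mul_C]
    · simp [powerSeriesSwap, ← map_pow, PowerSeries.coeff_mul_C, coeff_monomial, hnd, hnd.symm]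

theorem powerSeriesSwap_injective : Function.Injective (powerSeriesSwap (R := R)) := by
  intro Q Q' h
  ext d j
  rw [← coeff_coeff_powerSeriesSwap, ← coeff_coeff_powerSeriesSwap, h]

theorem coeff_zero_powerSeriesSwap (Q : (PowerSeries R)[X]) :
    PowerSeries.coeff 0 (powerSeriesSwap Q) = Q.map PowerSeries.constantCoeff := by
  ext d
  rw [coeff_coeff_powerSeriesSwap, coeff_map, PowerSeries.coeff_zero_eq_constantCoeff_apply]

theorem exists_powerSeriesSwap_eq {a : PowerSeries R[X]} {k : ℕ}
    (ha : ∀ j, (PowerSeries.coeff j a).natDegree ≤ k) : ∃ Q, powerSeriesSwap Q = a := by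
  refine ⟨∑ d ∈ Finset.range (k + 1),
    monomial d (PowerSeries.mk fun j => (PowerSeries.coeff j a).coeff d), ?_⟩
  ext j d
  rw [coeff_coeff_powerSeriesSwap, finsetSum_coeff]
  simp only [coeff_monomial, Finset.sum_ite_eq', Finset.mem_range]
  split_ifs with hd
  · rw [PowerSeries.coeff_mk]
  · rw [map_zero, coeff_eq_zero_of_natDegree_lt ((ha j).trans_lt (by omega))]

theorem degree_coeff_powerSeriesSwap_lt {P : (PowerSeries R)[X]} (hP : P.Monic) {j : ℕ}
    (hj : 0 < j) : (PowerSeries.coeff j (powerSeriesSwap P)).degree < P.natDegree := by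
  rw [degree_lt_iff_coeff_zero]
  intro d hd
  rw [coeff_coeff_powerSeriesSwap]
  rcases hd.eq_or_lt with rfl | hd
  · rw [hP.coeff_natDegree, PowerSeries.coeff_one, if_neg hj.ne']
  · rw [coeff_eq_zero_of_natDegree_lt hd, map_zero]

theorem exists_monic_powerSeriesSwap_eq [Nontrivial R] {a : PowerSeries R[X]} {p : R[X]}
    (hp : p.Monic) (h0 : PowerSeries.coeff 0 a = p)
    (ha : ∀ j, 0 < j → (PowerSeries.coeff j a).degree < p.degree) :
    ∃ A : (PowerSeries R)[X], A.Monic ∧ A.map PowerSeries.constantCoeff = p ∧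
      powerSeriesSwap A = a := by
  have hlt : ∀ j, 0 < j → (PowerSeries.coeff j a).degree < p.natDegree := fun j hj =>
    (ha j hj).trans_eq (degree_eq_natDegree hp.ne_zero)
  have hle : ∀ j, (PowerSeries.coeff j a).natDegree ≤ p.natDegree := by
    intro j
    rcases j.eq_zero_or_pos with rfl | hj
    · rw [h0]
    · exact natDegree_le_of_degree_le (hlt j hj).le
  obtain ⟨A, rfl⟩ := exists_powerSeriesSwap_eq hle
  refine ⟨A, monic_of_natDegree_le_of_coeff_eq_one p.natDegree ?_ ?_,
    h0 ▸ (coeff_zero_powerSeriesSwap A).symm, rfl⟩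
  · refine natDegree_le_iff_coeff_eq_zero.mpr fun d hd => PowerSeries.ext fun j => ?_
    rw [← coeff_coeff_powerSeriesSwap, map_zero,
      coeff_eq_zero_of_natDegree_lt ((hle j).trans_lt hd)]
  · refine PowerSeries.ext fun j => ?_
    rw [← coeff_coeff_powerSeriesSwap, PowerSeries.coeff_one]
    rcases j.eq_zero_or_pos with rfl | hj
    · rw [h0, hp.coeff_natDegree, if_pos rfl]
    · rw [coeff_eq_zero_of_degree_lt (hlt j hj), if_neg hj.ne']

theorem exists_mul_eq_of_map_constantCoeff_eq {K : Type*} [Field K] {P : (PowerSeries K)[X]}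
    (hP : P.Monic) {p q : K[X]} (hp : p.Monic) (hq : q.Monic) (hpq : IsCoprime p q)
    (h : P.map PowerSeries.constantCoeff = p * q) :
    ∃ A B : (PowerSeries K)[X], A.Monic ∧ B.Monic ∧ A.map PowerSeries.constantCoeff = p ∧
      B.map PowerSeries.constantCoeff = q ∧ A * B = P := by
  have hdeg : (p * q).degree = P.natDegree := by
    rw [← h, degree_eq_natDegree (hP.map _).ne_zero, hP.natDegree_map]
  obtain ⟨A', B', hA0, hB0, hAB, hmul⟩ := PowerSeries.exists_mul_eq_of_isCoprime hp hq hpq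
    ((coeff_zero_powerSeriesSwap P).trans h)
    (fun j hj => hdeg ▸ degree_coeff_powerSeriesSwap_lt hP hj)
  obtain ⟨A, hA, hAp, rfl⟩ := exists_monic_powerSeriesSwap_eq hp hA0 fun j hj => (hAB j hj).1
  obtain ⟨B, hB, hBq, rfl⟩ := exists_monic_powerSeriesSwap_eq hq hB0 fun j hj => (hAB j hj).2
  exact ⟨A, B, hA, hB, hAp, hBq, powerSeriesSwap_injective (by rw [map_mul, hmul])⟩

end Polynomial

namespace LaurentSeries

open HahnSeries

section CommRing

variable {R : Type*} [CommRing R] (m : ℕ+)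

theorem coeff_substPow_mul (f : LaurentSeries R) (i : ℤ) :
    (substPow R m f).coeff (m * i) = f.coeff i :=
  embDomain_coeff (a := i)

theorem coeff_substPow_of_not_dvd (f : LaurentSeries R) {j : ℤ} (hj : ¬ (m : ℤ) ∣ j) :
    (substPow R m f).coeff j = 0 :=
  embDomain_of_notMem_range fun ⟨i, hi⟩ => hj ⟨i, hi.symm⟩

theorem substPow_injective : Function.Injective (substPow R m) :=
  embDomain_injective

theorem order_substPow (f : LaurentSeries R) : (substPow R m f).order = m * f.order := by
  rcases eq_or_ne f 0 with rfl | hf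
  · simp
  have hτ : substPow R m f ≠ 0 := (map_ne_zero_iff _ (substPow_injective m)).mpr hf
  apply WithTop.coe_injective
  rw [order_eq_orderTop_of_ne_zero hτ]
  exact orderTop_embDomain.trans (by rw [← order_eq_orderTop_of_ne_zero hf]; rfl)

theorem substPow_comp (m' : ℕ+) :
    (substPow R m').comp (substPow R m) = substPow R (m * m') := by
  ext f j
  rw [RingHom.comp_apply]
  by_cases h : ((m * m' : ℕ+) : ℤ) ∣ j
  · obtain ⟨i, rfl⟩ := h
    rw [coeff_substPow_mul, show ((m * m' : ℕ+) : ℤ) * i = m' * (m * i) by push_cast; ring,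
      coeff_substPow_mul, coeff_substPow_mul]
  · rw [coeff_substPow_of_not_dvd _ _ h]
    by_cases h' : (m' : ℤ) ∣ j
    · obtain ⟨i, rfl⟩ := h'
      rw [coeff_substPow_mul]
      refine coeff_substPow_of_not_dvd _ _ fun ⟨k, hk⟩ => h ⟨k, ?_⟩
      rw [hk]; push_cast; ring
    · exact coeff_substPow_of_not_dvd _ _ h'

theorem substPow_one : substPow R 1 = RingHom.id (LaurentSeries R) := by
  ext f j
  simpa using coeff_substPow_mul 1 f j

theorem exists_monic_map_ofPowerSeries_eq {H : (LaurentSeries R)[X]} (hH : H.Monic)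
    (hord : ∀ i, 0 ≤ (H.coeff i).order) :
    ∃ P : (PowerSeries R)[X], P.Monic ∧ P.map (ofPowerSeries ℤ R) = H := by
  have hlifts : H ∈ lifts (ofPowerSeries ℤ R) := by
    refine (lifts_iff_coeff_lifts H).mpr fun i => ?_
    exact ⟨_, X_order_mul_powerSeriesPart (Int.toNat_of_nonneg (hord i))⟩
  obtain ⟨P, hPH, -, hP⟩ := lifts_and_natDegree_eq_and_monic hlifts hH
  exact ⟨P, hP, hPH⟩

theorem coeff_map_constantCoeff_of_map_eq {P : (PowerSeries R)[X]} {H : (LaurentSeries R)[X]}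
    (hPH : P.map (ofPowerSeries ℤ R) = H) (i : ℕ) :
    (P.map PowerSeries.constantCoeff).coeff i = (H.coeff i).coeff 0 := by
  rw [← hPH, coeff_map, coeff_map, ← Nat.cast_zero, ofPowerSeries_apply_coeff,
    PowerSeries.coeff_zero_eq_constantCoeff_apply]

theorem _root_.Polynomial.Splits.map_substPow_mul {F : (LaurentSeries R)[X]} {m : ℕ+}
    (h : (F.map (substPow R m)).Splits) (m' : ℕ+) : (F.map (substPow R (m * m'))).Splits := by
  rw [← substPow_comp, ← map_map]
  exact h.map _

/-- `G(T^w, T^u Y) / T^(n u)` with `n = natDegree G`: its roots are `T^(-u)` times those of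
`G(T^w, Y)`. -/
noncomputable def newtonRescale (G : (LaurentSeries R)[X]) (w : ℕ+) (u : ℤ) :
    (LaurentSeries R)[X] :=
  (G.map (substPow R w)).scaleRoots (single (-u) 1)

theorem coeff_newtonRescale (G : (LaurentSeries R)[X]) (w : ℕ+) (u : ℤ) (i : ℕ) :
    (newtonRescale G w u).coeff i =
      substPow R w (G.coeff i) * single (-((G.natDegree - i : ℕ) * u)) 1 := by
  rw [newtonRescale, coeff_scaleRoots, coeff_map,
    natDegree_map_eq_of_injective (substPow_injective w), single_pow, one_pow, nsmul_eq_mul,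
    mul_neg]

theorem natDegree_newtonRescale (G : (LaurentSeries R)[X]) (w : ℕ+) (u : ℤ) :
    (newtonRescale G w u).natDegree = G.natDegree := by
  rw [newtonRescale, natDegree_scaleRoots, natDegree_map_eq_of_injective (substPow_injective w)]

end CommRing

section Field

variable {K : Type*} [Field K]

instance [CharZero K] : CharZero (LaurentSeries K) :=
  charZero_of_injective_algebraMap (algebraMap K _).injective

theorem order_coeff_newtonRescale {G : (LaurentSeries K)[X]} (w : ℕ+) (u : ℤ) {i : ℕ}
    (hi : G.coeff i ≠ 0) :
    ((newtonRescale G w u).coeff i).order =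
      w * (G.coeff i).order - (G.natDegree - i : ℕ) * u := by
  rw [coeff_newtonRescale, order_mul ((map_ne_zero_iff _ (substPow_injective w)).mpr hi)
    (single_ne_zero one_ne_zero), order_substPow, order_single one_ne_zero]
  ring

theorem exists_order_coeff_newtonRescale_nonneg {G : (LaurentSeries K)[X]} (hG : G.Monic)
    (hn : 0 < G.natDegree) (h0 : G.coeff 0 ≠ 0) :
    ∃ (w : ℕ+) (u : ℤ), (∀ i, 0 ≤ ((newtonRescale G w u).coeff i).order) ∧
      ∃ i < G.natDegree, ((newtonRescale G w u).coeff i).coeff 0 ≠ 0 := by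
  classical
  set n := G.natDegree
  set S := (Finset.range n).filter fun i => G.coeff i ≠ 0
  -- `i₀` realises the least slope of the Newton polygon
  obtain ⟨i₀, hi₀S, hmin⟩ := S.exists_min_image
    (fun i => ((G.coeff i).order : ℚ) / (n - i : ℕ)) ⟨0, by simp [S, hn, h0]⟩
  obtain ⟨hi₀, hGi₀⟩ : i₀ < n ∧ G.coeff i₀ ≠ 0 := by simpa [S] using hi₀S
  set u := (G.coeff i₀).order
  set w : ℕ+ := ⟨n - i₀, Nat.sub_pos_of_lt hi₀⟩
  have hw : (w : ℤ) = (n - i₀ : ℕ) := rfl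
  refine ⟨w, u, fun i => ?_, i₀, hi₀, ?_⟩
  · by_cases hi : G.coeff i = 0
    · simp [coeff_newtonRescale, hi]
    rw [order_coeff_newtonRescale _ _ hi, hw]
    rcases (le_natDegree_of_ne_zero hi).eq_or_lt with rfl | hin
    · simp [hG.coeff_natDegree]
    have hslope := hmin i (Finset.mem_filter.mpr ⟨Finset.mem_range.mpr hin, hi⟩)
    rw [div_le_div_iff₀ (Nat.cast_pos.mpr (Nat.sub_pos_of_lt hi₀))
      (Nat.cast_pos.mpr (Nat.sub_pos_of_lt hin))] at hslope
    have : u * (n - i : ℕ) ≤ (G.coeff i).order * (n - i₀ : ℕ) := by exact_mod_cast hslope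
    linarith
  · have hne : (newtonRescale G w u).coeff i₀ ≠ 0 := by
      rw [coeff_newtonRescale]
      exact mul_ne_zero ((map_ne_zero_iff _ (substPow_injective w)).mpr hGi₀)
        (single_ne_zero one_ne_zero)
    have hord := order_coeff_newtonRescale w u hGi₀
    rw [hw, mul_comm, sub_self] at hord
    have := coeff_order_eq_zero.not.mpr hne
    rwa [hord] at this

theorem splits_map_substPow_of_scaleRoots_eq_mul {G A B : (LaurentSeries K)[X]} (hG : G.Monic)
    {w mA mB : ℕ+} {c : LaurentSeries K} (hc : c ≠ 0)
    (hAB : (G.map (substPow K w)).scaleRoots c = A * B) (hA : (A.map (substPow K mA)).Splits)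
    (hB : (B.map (substPow K mB)).Splits) : (G.map (substPow K (w * (mA * mB)))).Splits := by
  refine Splits.of_scaleRoots ((map_ne_zero_iff _ (substPow_injective (mA * mB))).mpr hc) ?_
  have hlead : substPow K (mA * mB) (G.map (substPow K w)).leadingCoeff ≠ 0 := by
    rw [(hG.map _).leadingCoeff, map_one]
    exact one_ne_zero
  rw [← substPow_comp, ← map_map, ← map_scaleRoots _ _ _ hlead, hAB, Polynomial.map_mul]
  exact (hA.map_substPow_mul mB).mul (mul_comm mA mB ▸ hB.map_substPow_mul mA)

end Field

section IsAlgClosed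

variable {K : Type*} [Field K] [IsAlgClosed K] [CharZero K]

theorem exists_newtonRescale_eq_mul {G : (LaurentSeries K)[X]} (hG : G.Monic)
    (hn : 2 ≤ G.natDegree) (hnext : G.nextCoeff = 0) (h0 : G.coeff 0 ≠ 0) :
    ∃ (w : ℕ+) (u : ℤ) (A B : (LaurentSeries K)[X]), A.Monic ∧ B.Monic ∧
      0 < A.natDegree ∧ 0 < B.natDegree ∧ newtonRescale G w u = A * B := by
  obtain ⟨w, u, hint, i₀, hi₀, hc⟩ :=
    exists_order_coeff_newtonRescale_nonneg hG (by omega) h0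
  have hH : (newtonRescale G w u).Monic := (monic_scaleRoots_iff _).mpr (hG.map _)
  obtain ⟨P, hP, hPH⟩ := exists_monic_map_ofPowerSeries_eq hH hint
  have hpm : (P.map PowerSeries.constantCoeff).Monic := hP.map _
  have hp : (P.map PowerSeries.constantCoeff).natDegree = G.natDegree := by
    rw [hP.natDegree_map, ← hP.natDegree_map (ofPowerSeries ℤ K), hPH, natDegree_newtonRescale]
  have hpcoeff := coeff_map_constantCoeff_of_map_eq hPH
  generalize hpP : P.map PowerSeries.constantCoeff = p at hpm hp hpcoeff
  have hpnext : p.nextCoeff = 0 := by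
    rw [nextCoeff_of_natDegree_pos (by omega), hp, hpcoeff, coeff_newtonRescale,
      ← nextCoeff_of_natDegree_pos (by omega), hnext, map_zero, zero_mul, HahnSeries.coeff_zero]
  have hpX : p ≠ X ^ p.natDegree := fun h => hc <| by
    rw [← hpcoeff, h, hp, coeff_X_pow, if_neg hi₀.ne]
  obtain ⟨p₁, p₂, hp₁, hp₂, hcop, rfl, hdeg₁, hdeg₂⟩ :=
    exists_isCoprime_mul_eq_of_nextCoeff_eq_zero hpm hpnext hpX
  obtain ⟨A, B, hA, hB, hAp, hBq, hAB⟩ :=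
    exists_mul_eq_of_map_constantCoeff_eq hP hp₁ hp₂ hcop hpP
  refine ⟨w, u, A.map (ofPowerSeries ℤ K), B.map (ofPowerSeries ℤ K), hA.map _, hB.map _, ?_, ?_,
    by rw [← Polynomial.map_mul, hAB, hPH]⟩
  · rwa [hA.natDegree_map, ← hA.natDegree_map PowerSeries.constantCoeff, hAp]
  · rwa [hB.natDegree_map, ← hB.natDegree_map PowerSeries.constantCoeff, hBq]

theorem exists_scaleRoots_map_substPow_eq_mul {G : (LaurentSeries K)[X]} (hG : G.Monic)
    (hn : 2 ≤ G.natDegree) (hnext : G.nextCoeff = 0) :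
    ∃ (w : ℕ+) (c : LaurentSeries K), c ≠ 0 ∧ ∃ A B : (LaurentSeries K)[X],
      A.Monic ∧ B.Monic ∧ 0 < A.natDegree ∧ 0 < B.natDegree ∧
        (G.map (substPow K w)).scaleRoots c = A * B := by
  by_cases h0 : G.coeff 0 = 0
  · obtain ⟨B, rfl⟩ := X_dvd_iff.mpr h0
    have hB : B.Monic := monic_X.of_mul_monic_left hG
    refine ⟨1, 1, one_ne_zero, X, B, monic_X, hB, by simp, ?_, by simp [substPow_one]⟩
    rw [natDegree_mul X_ne_zero hB.ne_zero, natDegree_X] at hn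
    omega
  obtain ⟨w, u, A, B, hAB⟩ := exists_newtonRescale_eq_mul hG hn hnext h0
  exact ⟨w, single (-u) 1, single_ne_zero one_ne_zero, A, B, hAB⟩

theorem exists_splits_map_substPow {F : (LaurentSeries K)[X]} (hF : F.Monic) :
    ∃ m : ℕ+, (F.map (substPow K m)).Splits := by
  induction hn : F.natDegree using Nat.strong_induction_on generalizing F with
  | _ n ih =>
  rcases le_or_gt n 1 with hn1 | hn1
  · exact ⟨1, Splits.of_natDegree_le_one (natDegree_map_le.trans (hn ▸ hn1))⟩
  set r : LaurentSeries K := -F.nextCoeff / n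
  have hG : (taylor r F).Monic := by rw [taylor_apply]; exact hF.comp_X_add_C r
  have hGnext : (taylor r F).nextCoeff = 0 := by
    rw [hF.nextCoeff_taylor, hn, mul_div_cancel₀ _ (Nat.cast_ne_zero.mpr (by omega)),
      add_neg_cancel]
  obtain ⟨w, c, hc, A, B, hA, hB, hA0, hB0, hAB⟩ :=
    exists_scaleRoots_map_substPow_eq_mul hG (by rw [natDegree_taylor]; omega) hGnext
  have hdeg : A.natDegree + B.natDegree = n := by
    rw [← natDegree_mul hA.ne_zero hB.ne_zero, ← hAB, natDegree_scaleRoots,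
      natDegree_map_eq_of_injective (substPow_injective w), natDegree_taylor, hn]
  obtain ⟨mA, hmA⟩ := ih _ (by omega) hA rfl
  obtain ⟨mB, hmB⟩ := ih _ (by omega) hB rfl
  have hGsplits := splits_map_substPow_of_scaleRoots_eq_mul hG hc hAB hmA hmB
  rw [map_taylor] at hGsplits
  exact ⟨_, hGsplits.of_taylor⟩

end IsAlgClosed

end LaurentSeries

theorem statement6_general {K : Type*} [Field K] [IsAlgClosed K] [CharZero K]
    (n : ℕ) (F : Polynomial (LaurentSeries K))
    (hmonic : F.Monic) (hdeg : F.natDegree = n) :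
    ∃ m : ℕ+, ∃ η : Fin n → LaurentSeries K,
      F.map (LaurentSeries.substPow K m) = ∏ i, (X - C (η i)) := by
  obtain ⟨m, hm⟩ := LaurentSeries.exists_splits_map_substPow hmonic
  obtain ⟨η, hη⟩ :=
    (hmonic.map _).exists_eq_prod_X_sub_C hm (by rw [hmonic.natDegree_map, hdeg])
  exact ⟨m, η, hη⟩

/-- The field of fractional power series is separably algebraically closed: a monic separable
`F ∈ (K((X)))[Y]` of degree `n ≥ 1` factors linearly after the substitution `X ↦ T^m`
for some `m > 0`. -/
theorem statement6 {K : Type*} [Field K] [IsAlgClosed K] [CharZero K]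
    (n : ℕ) (hn : 1 ≤ n) (F : Polynomial (LaurentSeries K))
    (hmonic : F.Monic) (hdeg : F.natDegree = n) (hsep : F.Separable) :
    ∃ m : ℕ+, ∃ η : Fin n → LaurentSeries K,
      F.map (LaurentSeries.substPow K m) = ∏ i, (X - C (η i)) :=
  statement6_general n F hmonic hdeg
end

section
/- Let K be a field, let n ≥ 1, let q be a positive integer, and let a₀, a₁, …, a_n ∈ K[X] with a_n ≠ 0. Set d = q · (the multiplicity of 0 as a root of a_n). Then every γ ∈ K((T)) satisfying Σ_{i=0}^n (a_i evaluated at T^q in K((T))) · γ^{n−i} = 0 is nonzero and has order at most d; equivalently, if γ ∈ K((T)) is zero or has order greater than d, then Σ_{i=0}^n (a_i evaluated at T^q) · γ^{n−i} ≠ 0. -/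
/-!
Let `v` be the `T`-adic valuation `orderTop` on `K((T))`. Evaluation at `T^q` sends every
polynomial to a series of nonnegative valuation, and a nonzero `p` to one of valuation
`q · ord₀ p`, where `ord₀ p` is the multiplicity of `0` as a root of `p`. If `v γ > d`, then each
term `aᵢ(T^q) γ^(n-i)` with `i < n` has valuation at least `v γ > d = v (aₙ(T^q))`, so the last
term strictly dominates and the whole sum has valuation `d`; in particular it is nonzero.
-/

open Polynomial

namespace AddValuation

variable {R A Γ₀ : Type*} [CommRing R] [CommRing A] [Algebra R A]
  [LinearOrderedAddCommMonoidWithTop Γ₀] (v : AddValuation A Γ₀)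

theorem zero_le_map_aeval (hR : ∀ r : R, 0 ≤ v (algebraMap R A r)) {x : A} (hx : 0 ≤ v x)
    (p : R[X]) : 0 ≤ v (aeval x p) := by
  induction p using Polynomial.induction_on' with
  | add p q hp hq => rw [_root_.map_add]; exact v.map_le_add hp hq
  | monomial n r =>
    rw [aeval_monomial, v.map_mul, v.map_pow]
    exact add_nonneg (hR r) (nsmul_nonneg hx n)

theorem map_aeval_eq_rootMultiplicity_nsmul (hR : ∀ r : R, r ≠ 0 → v (algebraMap R A r) = 0)
    {x : A} (hx : 0 < v x) {p : R[X]} (hp : p ≠ 0) :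
    v (aeval x p) = p.rootMultiplicity 0 • v x := by
  have hR_nonneg (r : R) : 0 ≤ v (algebraMap R A r) := by
    rcases eq_or_ne r 0 with rfl | hr
    · simp
    · exact (hR r hr).ge
  obtain ⟨b, hpb, hb⟩ := p.exists_eq_pow_rootMultiplicity_mul_and_not_dvd hp 0
  rw [C_0, sub_zero] at hpb hb
  have hb0 : b.coeff 0 ≠ 0 := fun h => hb (X_dvd_iff.2 h)
  have hdom : v (algebraMap R A (b.coeff 0)) < v (x * aeval x b.divX) := by
    rw [hR _ hb0, v.map_mul]
    exact add_pos_of_pos_of_nonneg hx (v.zero_le_map_aeval hR_nonneg hx.le _)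
  have hvb : v (aeval x b) = 0 := by
    rw [← X_mul_divX_add b, _root_.map_add, _root_.map_mul, aeval_X, aeval_C,
      v.map_add_eq_of_lt_right hdom, hR _ hb0]
  nth_rewrite 1 [hpb]
  rw [_root_.map_mul, _root_.map_pow, aeval_X, v.map_mul, v.map_pow, hvb, add_zero]

theorem map_sum_range_mul_pow_eq_of_lt {c : ℕ → A} {γ : A} {n : ℕ} (hc : ∀ i, 0 ≤ v (c i))
    (hγ : v (c n) < v γ) :
    v (∑ i ∈ Finset.range (n + 1), c i * γ ^ (n - i)) = v (c n) := by
  rw [Finset.sum_range_succ, Nat.sub_self, pow_zero, mul_one]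
  refine v.map_add_eq_of_lt_right (v.map_lt_sum hγ.ne_top fun i hi => ?_)
  have hni : n - i ≠ 0 := by have := Finset.mem_range.1 hi; omega
  calc v (c n) < v γ := hγ
    _ ≤ (n - i) • v γ := le_self_nsmul ((hc n).trans hγ.le) hni
    _ ≤ v (c i) + (n - i) • v γ := le_add_of_nonneg_left (hc i)
    _ = v (c i * γ ^ (n - i)) := by rw [v.map_mul, v.map_pow]

end AddValuation

namespace HahnSeries

variable {Γ R : Type*} [LinearOrder Γ] [Zero R]

theorem orderTop_le_coe_iff [Zero Γ] {x : HahnSeries Γ R} {g : Γ} :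
    x.orderTop ≤ g ↔ x ≠ 0 ∧ x.order ≤ g := by
  rcases eq_or_ne x 0 with rfl | hx
  · simp
  · simp [hx, ← order_eq_orderTop_of_ne_zero hx]

end HahnSeries

theorem statement8_general {K : Type*} [Field K] (n : ℕ) (q : ℕ+)
    (a : ℕ → Polynomial K) (han : a n ≠ 0) :
    ∀ γ : LaurentSeries K,
      (∑ i ∈ Finset.range (n + 1),
          aeval ((HahnSeries.single (1 : ℤ) (1 : K)) ^ (q : ℕ)) (a i) * γ ^ (n - i)) = 0 →
      γ ≠ 0 ∧ γ.order ≤ ((q : ℕ) * Polynomial.rootMultiplicity 0 (a n) : ℕ) := by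
  intro γ hsum
  rw [← HahnSeries.orderTop_le_coe_iff, ← HahnSeries.addVal_apply]
  set v := HahnSeries.addVal ℤ K
  set Tq : LaurentSeries K := HahnSeries.single (1 : ℤ) (1 : K) ^ (q : ℕ)
  have hC (r : K) (hr : r ≠ 0) : v (algebraMap K _ r) = 0 := by
    simp [v, HahnSeries.algebraMap_apply', hr]
  have hC_nonneg (r : K) : 0 ≤ v (algebraMap K _ r) := by
    simpa [v, HahnSeries.addVal_apply, HahnSeries.algebraMap_apply'] using
      HahnSeries.orderTop_single_le (a := (0 : ℤ)) (r := r)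
  have hvT : v Tq = ((q : ℕ) : ℤ) := by
    rw [v.map_pow, HahnSeries.addVal_apply, HahnSeries.orderTop_single one_ne_zero,
      ← WithTop.coe_nsmul, nsmul_one]
  have hvan : v (aeval Tq (a n)) = (((q : ℕ) * (a n).rootMultiplicity 0 : ℕ) : ℤ) := by
    rw [v.map_aeval_eq_rootMultiplicity_nsmul hC (by simp [hvT]) han, hvT, ← WithTop.coe_nsmul,
      nsmul_eq_mul, mul_comm]
    norm_cast
  by_contra! hγ
  have hc (i : ℕ) : 0 ≤ v (aeval Tq (a i)) := v.zero_le_map_aeval hC_nonneg (by simp [hvT]) _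
  have := v.map_sum_range_mul_pow_eq_of_lt (c := fun i => aeval Tq (a i)) (γ := γ) hc
    (by rwa [hvan])
  rw [hsum, v.map_zero, hvan] at this
  exact WithTop.top_ne_coe this

/-- A bound on the order of Laurent series roots: if `aₙ ≠ 0` and
`γ ∈ K((T))` satisfies `Σ_{i=0}^n aᵢ(T^q)·γ^(n-i) = 0`, then `γ ≠ 0` and
`order γ ≤ q · (multiplicity of 0 as a root of aₙ)`. -/
theorem statement8 {K : Type*} [Field K] (n : ℕ) (hn : 1 ≤ n) (q : ℕ+)
    (a : ℕ → Polynomial K) (han : a n ≠ 0) :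
    ∀ γ : LaurentSeries K,
      (∑ i ∈ Finset.range (n + 1),
          aeval ((HahnSeries.single (1 : ℤ) (1 : K)) ^ (q : ℕ)) (a i) * γ ^ (n - i)) = 0 →
      γ ≠ 0 ∧ γ.order ≤ ((q : ℕ) * Polynomial.rootMultiplicity 0 (a n) : ℕ) :=
  statement8_general n q a han
end

section
/- Let R be a linearly ordered field in which every nonnegative element is a square. Then for every nonzero Laurent series α ∈ R((X)) there exists β ∈ R((T)) such that β² equals the image of α under the field homomorphism τ₂ : R((X)) → R((T)) sending X to T², or β² equals the negative of that image. -/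
open PowerSeries

theorem PowerSeries.exists_sq_eq_of_constantCoeff_eq_sq {A : Type*} [CommRing A] {q : A⟦X⟧}
    {e : A} (he : constantCoeff q = e ^ 2) (h2e : IsUnit (2 * e)) : ∃ s : A⟦X⟧, s ^ 2 = q := by
  set f : Polynomial A⟦X⟧ := Polynomial.X ^ 2 - Polynomial.C q
  have hroot : f.eval (C e) ∈ Ideal.span {X} := by
    rw [Ideal.mem_span_singleton, X_dvd_iff]
    simp [f, he]
  have hsimple : IsUnit (Ideal.Quotient.mk (Ideal.span {X}) (f.derivative.eval (C e))) := by
    have hderiv : f.derivative.eval (C e) = C (2 * e) := by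
      simp [f, one_add_one_eq_two, map_ofNat]
    rw [hderiv]
    exact (h2e.map C).map _
  obtain ⟨s, hs, -⟩ :=
    HenselianRing.is_henselian f (Polynomial.monic_X_pow_sub_C q two_ne_zero) _ hroot hsimple
  exact ⟨s, by simpa [f, sub_eq_zero] using hs⟩

namespace LaurentSeries

theorem constantCoeff_powerSeriesPart_ne_zero {R : Type*} [Semiring R] {x : LaurentSeries R}
    (hx : x ≠ 0) : constantCoeff x.powerSeriesPart ≠ 0 := by
  simpa [← coeff_zero_eq_constantCoeff_apply, powerSeriesPart_coeff]
    using HahnSeries.coeff_order_eq_zero.not.mpr hx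

variable {R : Type*} [CommRing R]

theorem substPow_single (m : ℕ+) (d : ℤ) (r : R) :
    substPow R m (HahnSeries.single d r) = HahnSeries.single (m * d) r := by
  rw [substPow]
  erw [HahnSeries.embDomainRingHom_apply, HahnSeries.embDomain_single]
  rfl

theorem substPow_single_mul_pow (m : ℕ+) (d : ℤ) (s : R⟦X⟧) :
    substPow R m (HahnSeries.single d 1 * HahnSeries.ofPowerSeries ℤ R (s ^ (m : ℕ))) =
      (HahnSeries.single d 1 * substPow R m (HahnSeries.ofPowerSeries ℤ R s)) ^ (m : ℕ) := by
  rw [map_pow, map_mul, map_pow, mul_pow, substPow_single, HahnSeries.single_pow, one_pow,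
    nsmul_eq_mul]

theorem exists_sq_eq_substPow_two_single_mul (d : ℤ) {P : R⟦X⟧} {e : R}
    (he : constantCoeff P = e ^ 2) (h2e : IsUnit (2 * e)) :
    ∃ β : LaurentSeries R,
      β ^ 2 = substPow R 2 (HahnSeries.single d 1 * HahnSeries.ofPowerSeries ℤ R P) := by
  obtain ⟨s, rfl⟩ := exists_sq_eq_of_constantCoeff_eq_sq he h2e
  exact ⟨_, (substPow_single_mul_pow 2 d s).symm⟩

end LaurentSeries

/-- Over a linearly ordered field in which every nonnegative element is a square, every nonzero
Laurent series `α` has, after the substitution `X ↦ T²`, a square root up to sign. -/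
theorem statement9 {R : Type*} [Field R] [LinearOrder R] [IsStrictOrderedRing R]
    (hsq : ∀ x : R, 0 ≤ x → ∃ y : R, y ^ 2 = x)
    (α : LaurentSeries R) (hα : α ≠ 0) :
    ∃ β : LaurentSeries R,
      β ^ 2 = LaurentSeries.substPow R 2 α ∨ β ^ 2 = -(LaurentSeries.substPow R 2 α) := by
  set c := constantCoeff α.powerSeriesPart
  have hc : c ≠ 0 := LaurentSeries.constantCoeff_powerSeriesPart_ne_zero hα
  obtain ⟨e, he⟩ := hsq |c| (abs_nonneg c)
  have h2e : IsUnit (2 * e) := by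
    refine (mul_ne_zero two_ne_zero ?_).isUnit
    rintro rfl
    exact hc (abs_eq_zero.mp (by simpa using he.symm))
  have hα' := LaurentSeries.single_order_mul_powerSeriesPart α
  rcases abs_choice c with hpos | hneg
  · obtain ⟨β, hβ⟩ :=
      LaurentSeries.exists_sq_eq_substPow_two_single_mul α.order (he.trans hpos).symm h2e
    exact ⟨β, .inl (by rwa [hα'] at hβ)⟩
  · obtain ⟨β, hβ⟩ := LaurentSeries.exists_sq_eq_substPow_two_single_mul α.order
      (P := -α.powerSeriesPart) (by rw [map_neg, ← hneg, he]) h2e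
    exact ⟨β, .inr (by rwa [map_neg, mul_neg, map_neg, hα'] at hβ)⟩
end

section
/- Let R be a linearly ordered field in which every nonnegative element is a square, and suppose α ∈ R[[X]] is a formal power series whose constant coefficient is strictly positive. Then there exists β ∈ R[[X]] with β² = α. -/
open Finset

private def sqrtCoeff {R : Type*} [Field R] (a : ℕ → R) (b0 : R) : ℕ → R
  | 0 => b0
  | (n+1) => (a (n+1) - ∑ i ∈ (Finset.range n).attach,
      sqrtCoeff a b0 (i.1+1) * sqrtCoeff a b0 (n - i.1)) / (2 * b0)
  decreasing_by
  · have := Finset.mem_range.mp i.2; omega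
  · omega

/-- Over a linearly ordered field in which every nonnegative element is a square, a formal
power series with strictly positive constant coefficient has a square root. -/
theorem statement10 {R : Type*} [Field R] [LinearOrder R] [IsStrictOrderedRing R]
    (hsq : ∀ x : R, 0 ≤ x → ∃ y : R, y ^ 2 = x)
    (α : PowerSeries R) (hα : 0 < PowerSeries.constantCoeff α) :
    ∃ β : PowerSeries R, β ^ 2 = α := by
  set a : ℕ → R := fun n => PowerSeries.coeff n α with ha
  obtain ⟨b0, hb0⟩ := hsq (a 0) (by
    have : a 0 = PowerSeries.constantCoeff α := by
      simp [ha, PowerSeries.coeff_zero_eq_constantCoeff]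
    rw [this]; exact hα.le)
  have hb0ne : b0 ≠ 0 := by
    intro h
    rw [h] at hb0
    have : a 0 = PowerSeries.constantCoeff α := by
      simp [ha, PowerSeries.coeff_zero_eq_constantCoeff]
    rw [this] at hb0
    simp at hb0
    exact hα.ne' hb0.symm
  set b : ℕ → R := sqrtCoeff a b0 with hb
  refine ⟨PowerSeries.mk b, ?_⟩
  ext n
  rw [sq, PowerSeries.coeff_mul]
  simp only [PowerSeries.coeff_mk]
  rw [Finset.Nat.sum_antidiagonal_eq_sum_range_succ_mk]
  cases n with
  | zero =>
    simp only [Finset.sum_range_one]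
    rw [show b (0,0).1 * b (0,0).2 = b0 ^ 2 by simp [hb, sqrtCoeff, sq]]
    simpa [ha] using hb0
  | succ n =>
    -- sum over range (n+2)
    rw [Finset.sum_range_succ, Finset.sum_range_succ']
    simp only [Nat.succ_sub_succ, Nat.sub_zero, Nat.sub_self]
    have hmid : ∑ i ∈ Finset.range n, b (i+1) * b (n - i)
        = ∑ i ∈ (Finset.range n).attach, sqrtCoeff a b0 (i.1+1) * sqrtCoeff a b0 (n - i.1) := by
      rw [← Finset.sum_attach (Finset.range n)]
    have hbn : b (n+1) = (a (n+1) - ∑ i ∈ (Finset.range n).attach,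
        sqrtCoeff a b0 (i.1+1) * sqrtCoeff a b0 (n - i.1)) / (2 * b0) := by
      rw [hb]; rw [sqrtCoeff]
    have hb0' : b 0 = b0 := by simp [hb, sqrtCoeff]
    rw [hmid, hb0', hbn]
    field_simp
    ring
end

section
/- Let R be a commutative von Neumann regular ring (for every a ∈ R there exists b ∈ R with a·b·a = a) and let p ∈ R[X] be a separable polynomial. Then the quotient ring R[X]/(p) (the quotient of R[X] by the ideal generated by p) is von Neumann regular: for every element c of R[X]/(p) there exists d with c·d·c = c. -/
open Polynomial

/-- Clearing denominators: if a polynomial maps to zero in a localization,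
some element of the submonoid kills it. -/
lemma aux_clear {R L : Type*} [CommRing R] [CommRing L] (M : Submonoid R) [Algebra R L]
    [IsLocalization M L] (E : Polynomial R) (h : E.map (algebraMap R L) = 0) :
    ∃ u : M, C (u : R) * E = 0 := by
  have hco : ∀ n : ℕ, algebraMap R L (E.coeff n) = 0 := by
    intro n
    have := congrArg (fun q => Polynomial.coeff q n) h
    simpa [Polynomial.coeff_map] using this
  have key : ∀ F : Finset ℕ, ∃ u : M, ∀ n ∈ F, (u : R) * E.coeff n = 0 := by
    intro F
    induction F using Finset.induction with
    | empty => exact ⟨1, by simp⟩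
    | @insert a F ha ih =>
      obtain ⟨u, hu⟩ := ih
      obtain ⟨m, hm⟩ := (IsLocalization.map_eq_zero_iff M L _).mp (hco a)
      refine ⟨m * u, fun n hn => ?_⟩
      rcases Finset.mem_insert.mp hn with rfl | hn
      · have : ((m : R) * (u : R)) * E.coeff n = (u : R) * ((m : R) * E.coeff n) := by ring
        rw [Submonoid.coe_mul, this, hm, mul_zero]
      · have : ((m : R) * (u : R)) * E.coeff n = (m : R) * ((u : R) * E.coeff n) := by ring
        rw [Submonoid.coe_mul, this, hu n hn, mul_zero]
  obtain ⟨u, hu⟩ := key E.support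
  refine ⟨u, ?_⟩
  ext n
  rw [Polynomial.coeff_C_mul, Polynomial.coeff_zero]
  by_cases hn : n ∈ E.support
  · exact hu n hn
  · rw [Polynomial.notMem_support_iff.mp hn, mul_zero]

/-- The localization of a von Neumann regular commutative ring at a prime is a field. -/
lemma aux_field {R : Type*} [CommRing R] (hreg : ∀ a : R, ∃ b : R, a * b * a = a)
    (P : Ideal R) [P.IsPrime] : IsField (Localization.AtPrime P) := by
  set L := Localization.AtPrime P
  refine ⟨exists_pair_ne L, mul_comm, ?_⟩
  intro a ha
  obtain ⟨⟨r, s⟩, hrs⟩ := IsLocalization.surj P.primeCompl a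
  obtain ⟨b, hb⟩ := hreg r
  set f := algebraMap R L
  have hfs : IsUnit (f (s : R)) := IsLocalization.map_units L s
  set e : L := f r * f b with he
  have hee : e * e = e := by
    simp only [he, ← map_mul]
    congr 1
    linear_combination b * hb
  have hfr : f r = a * f (s : R) := hrs.symm
  rcases IsLocalRing.isUnit_or_isUnit_one_sub_self e with hu | hu
  · -- e is a unit, hence e = 1, hence f r is a unit, hence a is a unit
    have he1 : e = 1 := by
      have := hu.mul_left_cancel (by rw [hee, mul_one] : e * e = e * 1)
      exact this
    refine ⟨f (s : R) * f b, ?_⟩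
    calc a * (f (s : R) * f b) = (a * f s) * f b := by ring
      _ = f r * f b := by rw [hfr]
      _ = 1 := he1
  · -- 1 - e is a unit; but e * (1 - e) = 0, so e = 0, so f r = 0, so a = 0
    exfalso
    have he0 : e = 0 := by
      have h1 : e * (1 - e) = 0 := by rw [mul_sub, hee, mul_one, sub_self]
      have := hu.mul_left_cancel (by rw [← mul_assoc, mul_comm (1-e) e, h1, zero_mul, mul_zero] :
        (1 - e) * (e * 1) = (1 - e) * 0)
      simpa using this
    have hfr0 : f r = 0 := by
      have h2 : e * f r = f r := by
        calc e * f r = f (r * b * r) := by rw [he, ← map_mul, ← map_mul]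
          _ = f r := by rw [hb]
      rw [← h2, he0, zero_mul]
    apply ha
    have : a * f (s : R) = 0 := by rw [← hfr, hfr0]
    obtain ⟨v, hv⟩ := hfs
    calc a = a * (f (s : R) * (↑v⁻¹ : L)) := by
            rw [← hv, Units.mul_inv, mul_one]
      _ = (a * f (s : R)) * (↑v⁻¹ : L) := by ring
      _ = 0 := by rw [this, zero_mul]

/-- The key ideal membership: over a von Neumann regular ring with `p` separable,
`q ∈ (q², p)` for every polynomial `q`. -/
lemma aux_mem {R : Type*} [CommRing R] (hreg : ∀ a : R, ∃ b : R, a * b * a = a)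
    (p : Polynomial R) (hp : p.Separable) (q : Polynomial R) :
    q ∈ Ideal.span ({q ^ 2, p} : Set (Polynomial R)) := by
  set I : Ideal (Polynomial R) := Ideal.span ({q ^ 2, p} : Set (Polynomial R)) with hI
  have hq2I : q ^ 2 ∈ I := Ideal.subset_span (by simp)
  have hpI : p ∈ I := Ideal.subset_span (by simp)
  let J : Ideal R :=
    { carrier := { r : R | C r * q ∈ I }
      add_mem' := fun {a b} ha hb => by
        simp only [Set.mem_setOf_eq, map_add, add_mul] at *
        exact I.add_mem ha hb
      zero_mem' := by simp
      smul_mem' := fun c x hx => by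
        simp only [smul_eq_mul, map_mul, Set.mem_setOf_eq] at *
        rw [mul_assoc]
        exact I.mul_mem_left _ hx }
  have hJ : (1 : R) ∈ J := by
    by_contra h1
    have hJtop : J ≠ ⊤ := fun ht => h1 (ht ▸ Submodule.mem_top)
    obtain ⟨P, hPmax, hJP⟩ := Ideal.exists_le_maximal J hJtop
    haveI : P.IsPrime := hPmax.isPrime
    set L := Localization.AtPrime P
    letI : Field L := (aux_field hreg P).toField
    set f := algebraMap R L with hf
    set q₁ := q.map f with hq₁
    set p₁ := p.map f with hp₁
    have hsep : p₁.Separable := hp.map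
    have hsq : Squarefree p₁ := hsep.squarefree
    have hd : IsBezout.gcd (q₁ ^ 2) p₁ ∣ q₁ := by
      have h1 : Squarefree (IsBezout.gcd (q₁ ^ 2) p₁) :=
        Squarefree.squarefree_of_dvd (IsBezout.gcd_dvd_right (q₁ ^ 2) p₁) hsq
      exact (h1.dvd_pow_iff_dvd two_ne_zero).mp (IsBezout.gcd_dvd_left (q₁ ^ 2) p₁)
    have hq₁mem : q₁ ∈ Ideal.span ({q₁ ^ 2, p₁} : Set (Polynomial L)) := by
      rw [← IsBezout.span_gcd]
      exact Ideal.mem_span_singleton.mpr hd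
    obtain ⟨a, b, hab⟩ := Ideal.mem_span_pair.mp hq₁mem
    obtain ⟨s, hs⟩ := IsLocalization.integerNormalization_map_to_map P.primeCompl a
    obtain ⟨t, ht⟩ := IsLocalization.integerNormalization_map_to_map P.primeCompl b
    set G := IsLocalization.integerNormalization P.primeCompl a with hG
    set H := IsLocalization.integerNormalization P.primeCompl b with hH
    have hsmul : ∀ (r : R) (x : Polynomial L), r • x = C (f r) * x := by
      intro r x
      rw [← IsScalarTower.algebraMap_smul L r x, Polynomial.smul_eq_C_mul]
    set E : Polynomial R :=
      C ((s : R) * (t : R)) * q - (C (t : R) * G) * q ^ 2 - (C (s : R) * H) * p with hE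
    have hEmap : E.map f = 0 := by
      have hGmap : G.map f = C (f (s : R)) * a := by rw [hs, hsmul]
      have hHmap : H.map f = C (f (t : R)) * b := by rw [ht, hsmul]
      rw [hE]
      simp only [Polynomial.map_sub, Polynomial.map_mul, Polynomial.map_pow, Polynomial.map_C,
        map_mul, Polynomial.C_mul, hGmap, hHmap, ← hq₁, ← hp₁]
      linear_combination (-(C (f (s : R)) * C (f (t : R)))) * hab
    obtain ⟨u, hu⟩ := aux_clear P.primeCompl E hEmap
    have hmem : ((u : R) * ((s : R) * (t : R))) ∈ J := by
      show C ((u : R) * ((s : R) * (t : R))) * q ∈ I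
      have h2 : C ((u : R) * ((s : R) * (t : R))) * q =
          C (u : R) * ((C (t : R) * G) * q ^ 2) + C (u : R) * ((C (s : R) * H) * p) := by
        have h3 : C (u : R) * E = 0 := hu
        rw [hE] at h3
        simp only [map_mul] at h3 ⊢
        linear_combination h3
      rw [h2]
      exact I.add_mem (I.mul_mem_left _ (I.mul_mem_left _ hq2I))
        (I.mul_mem_left _ (I.mul_mem_left _ hpI))
    have : ((u : R) * ((s : R) * (t : R))) ∈ P.primeCompl :=
      P.primeCompl.mul_mem u.2 (P.primeCompl.mul_mem s.2 t.2)
    exact this (hJP hmem)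
  have := hJ
  show q ∈ I
  have h := this
  change C (1 : R) * q ∈ I at h
  rwa [map_one, one_mul] at h

/-- If `R` is a commutative von Neumann regular ring and `p ∈ R[X]` is separable,
then `R[X]/(p)` is von Neumann regular. -/
theorem statement12 {R : Type*} [CommRing R]
    (hreg : ∀ a : R, ∃ b : R, a * b * a = a)
    (p : Polynomial R) (hp : p.Separable) :
    ∀ c : Polynomial R ⧸ Ideal.span {p}, ∃ d : Polynomial R ⧸ Ideal.span {p},
      c * d * c = c := by
  intro c
  obtain ⟨q, rfl⟩ := Ideal.Quotient.mk_surjective c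
  obtain ⟨g, h, hgh⟩ := Ideal.mem_span_pair.mp (aux_mem hreg p hp q)
  refine ⟨Ideal.Quotient.mk _ g, ?_⟩
  rw [← map_mul, ← map_mul]
  rw [Ideal.Quotient.eq]
  have : q * g * q - q = -(h * p) := by linear_combination hgh
  rw [this]
  exact neg_mem (Ideal.mul_mem_left _ _ (Ideal.subset_span rfl))
end

section
/- Let R be a reduced commutative ring and let a₁, …, a_n ∈ R. If the i-th elementary symmetric function σ_i(a₁, …, a_n) equals 0 for every i with 1 ≤ i ≤ n, then a₁ = a₂ = ⋯ = a_n = 0. Equivalently, if ∏_{i=1}^n (X − C(a_i)) = X^n in R[X], then every a_i = 0. -/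
open Polynomial

/-- In a reduced commutative ring, if all the elementary symmetric functions
`σ_i(a₁, …, aₙ)`, `1 ≤ i ≤ n`, vanish then all the `aᵢ` vanish. -/
theorem statement14 {R : Type*} [CommRing R] [IsReduced R]
    (n : ℕ) (a : Fin n → R)
    (hsymm : ∀ i : ℕ, 1 ≤ i → i ≤ n →
      (Multiset.map a (Finset.univ : Finset (Fin n)).val).esymm i = 0) :
    ∀ i, a i = 0 := by
  intro i
  set s : Multiset R := Multiset.map a (Finset.univ : Finset (Fin n)).val with hs
  have hcard : Multiset.card s = n := by simp [hs]
  have key := Multiset.prod_X_sub_X_eq_sum_esymm s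
  rw [hcard] at key
  -- evaluate both sides at `a i`
  have h0 : Polynomial.eval (a i) (s.map fun t => X - C t).prod = 0 := by
    rw [Polynomial.eval_multiset_prod]
    refine Multiset.prod_eq_zero ?_
    have : a i ∈ s := Multiset.mem_map.2 ⟨i, Finset.mem_univ_val i, rfl⟩
    refine Multiset.mem_map.2 ⟨X - C (a i), Multiset.mem_map.2 ⟨a i, this, rfl⟩, ?_⟩
    simp
  have h1 : Polynomial.eval (a i)
      (∑ j ∈ Finset.range (n + 1), (-1 : R[X]) ^ j * (C (s.esymm j) * X ^ (n - j))) =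
      (a i) ^ n := by
    rw [Polynomial.eval_finset_sum]
    rw [Finset.sum_eq_single 0]
    · simp [Multiset.esymm]
    · intro j hj hj0
      have h1j : 1 ≤ j := Nat.one_le_iff_ne_zero.2 hj0
      have hjn : j ≤ n := Nat.lt_succ_iff.mp (Finset.mem_range.mp hj)
      simp [hsymm j h1j hjn]
    · simp
  have hnil : (a i) ^ n = 0 := by rw [← h1, ← key, h0]
  exact IsReduced.eq_zero _ ⟨n, hnil⟩
end

section
/- Let R be a reduced commutative ring, let α₁, …, α_n ∈ R[[X]] be formal power series, and let d be a positive rational number. Suppose that for every i with 1 ≤ i ≤ n the order of the power series σ_i(α₁, …, α_n) is at least d·i (where the order takes values in ℕ ∪ {∞}, with ∞ exceeding every rational). Then the order of α_i is at least d for every i with 1 ≤ i ≤ n. -/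
/-!
Each `αⱼ` is a root of the monic polynomial `∏ₖ (Y - αₖ) = ∑ᵢ (-1)ⁱ σᵢ Yⁿ⁻ⁱ`. Over a domain the
order is additive, so if `ord αⱼ = t < d` the leading term `αⱼⁿ` has order `n t`, while every other
term `σᵢ αⱼⁿ⁻ⁱ` has order at least `d i + (n - i) t > n t`, which is impossible. Over a reduced ring
it suffices to argue in each domain `R ⧸ p`, `p` prime: a coefficient vanishing modulo every prime
is nilpotent, hence zero.
-/

open PowerSeries

theorem Multiset.esymm_map_ringHom {A B : Type*} [CommSemiring A] [CommSemiring B] (f : A →+* B)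
    (s : Multiset A) (k : ℕ) : (s.map f).esymm k = f (s.esymm k) := by
  simp [Multiset.esymm, map_multiset_sum, Multiset.powersetCard_map, map_multiset_prod]

theorem WithTop.coe_le_map_natCast_iff {q : ℚ} {e : ℕ∞} :
    (q : WithTop ℚ) ≤ WithTop.map (Nat.cast : ℕ → ℚ) e ↔ (⌈q⌉₊ : ℕ∞) ≤ e := by
  cases e with
  | top => exact iff_of_true le_top le_top
  | coe t =>
    change (q : WithTop ℚ) ≤ ((t : ℚ) : WithTop ℚ) ↔ _
    rw [WithTop.coe_le_coe, Nat.cast_le, Nat.ceil_le]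

namespace PowerSeries

theorem le_order_of_forall_isPrime {R : Type*} [CommRing R] [IsReduced R] {φ : R⟦X⟧} {m : ℕ∞}
    (h : ∀ p : Ideal R, p.IsPrime → m ≤ (φ.map (Ideal.Quotient.mk p)).order) : m ≤ φ.order := by
  refine le_order _ _ fun i hi => IsNilpotent.eq_zero ?_
  rw [← mem_nilradical, nilradical_eq_sInf, Ideal.mem_sInf]
  intro p hp
  rw [← Ideal.Quotient.eq_zero_iff_mem, ← coeff_map]
  exact coeff_of_lt_order i (hi.trans_le (h p hp))

variable {K : Type*} [CommRing K] [IsDomain K]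

theorem exists_order_coeff_le_of_eval_eq_zero {P : Polynomial K⟦X⟧} (hP : P.Monic) {x : K⟦X⟧}
    (hx : P.eval x = 0) {t : ℕ} (ht : x.order = t) :
    ∃ k < P.natDegree, (P.coeff k).order ≤ ((P.natDegree - k) * t : ℕ) := by
  set N := P.natDegree
  by_contra! hlow
  have hlower : ((N * t : ℕ) : ℕ∞) < (∑ k ∈ Finset.range N, P.coeff k * x ^ k).order := by
    refine Finset.sum_induction _ (fun φ : K⟦X⟧ => ((N * t : ℕ) : ℕ∞) < φ.order)
      (fun a b ha hb => (lt_min ha hb).trans_le (min_order_le_order_add a b))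
      (by rw [order_zero]; exact ENat.natCast_lt_top _) fun k hk => ?_
    have hkN : k < N := Finset.mem_range.mp hk
    have hsplit : N * t = (N - k) * t + k * t := by
      rw [← add_mul, Nat.sub_add_cancel hkN.le]
    rw [order_mul, order_pow, ht, hsplit, Nat.cast_add]
    exact (ENat.add_lt_add_iff_right (ENat.natCast_ne_top _)).mpr (hlow k hkN)
  have htop : x ^ N = -∑ k ∈ Finset.range N, P.coeff k * x ^ k := by
    rw [eq_neg_iff_add_eq_zero, add_comm, ← hx, Polynomial.eval_eq_sum_range,
      Finset.sum_range_succ, hP.coeff_natDegree, one_mul]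
  rw [← order_neg, ← htop, order_pow, ht] at hlower
  simp at hlower

theorem exists_order_esymm_le_of_mem {s : Multiset K⟦X⟧} {x : K⟦X⟧} (hx : x ∈ s) {t : ℕ}
    (ht : x.order = t) :
    ∃ i, 1 ≤ i ∧ i ≤ Multiset.card s ∧ (s.esymm i).order ≤ (i * t : ℕ) := by
  set P : Polynomial K⟦X⟧ := (s.map fun a => Polynomial.X - Polynomial.C a).prod
  have hdeg : P.natDegree = Multiset.card s := Polynomial.natDegree_multiset_prod_X_sub_C_eq_card s
  have hmonic : P.Monic :=
    Polynomial.monic_multiset_prod_of_monic _ _ fun a _ => Polynomial.monic_X_sub_C a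
  have hroot : P.eval x = 0 := by
    rw [Polynomial.eval_multiset_prod]
    exact Multiset.prod_eq_zero (Multiset.mem_map.mpr
      ⟨_, Multiset.mem_map_of_mem _ hx, by simp⟩)
  obtain ⟨k, hk, hle⟩ := exists_order_coeff_le_of_eval_eq_zero hmonic hroot ht
  rw [hdeg] at hk hle
  refine ⟨Multiset.card s - k, by omega, by omega, ?_⟩
  rwa [Multiset.prod_X_sub_C_coeff s hk.le, order_mul,
    order_pow, order_neg, order_one, smul_zero, zero_add] at hle

theorem natCeil_le_order_of_le_order_esymm {s : Multiset K⟦X⟧} {d : ℚ}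
    (h : ∀ i, 1 ≤ i → i ≤ Multiset.card s → (⌈d * i⌉₊ : ℕ∞) ≤ (s.esymm i).order)
    {x : K⟦X⟧} (hx : x ∈ s) : (⌈d⌉₊ : ℕ∞) ≤ x.order := by
  by_contra! hlt
  obtain ⟨t, ht⟩ := ENat.ne_top_iff_exists.mp (hlt.trans (ENat.natCast_lt_top _)).ne
  rw [← ht, Nat.cast_lt] at hlt
  obtain ⟨i, hi, hin, hle⟩ := exists_order_esymm_le_of_mem hx ht.symm
  have hdi : d * i ≤ ((i * t : ℕ) : ℚ) := Nat.ceil_le.mp (by exact_mod_cast (h i hi hin).trans hle)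
  have htd : (t : ℚ) < d := Nat.lt_ceil.mp hlt
  have hi' : (1 : ℚ) ≤ i := by exact_mod_cast hi
  push_cast at hdi
  nlinarith

end PowerSeries

theorem statement15_general {R : Type*} [CommRing R] [IsReduced R]
    (n : ℕ) (α : Fin n → PowerSeries R) (d : ℚ)
    (hord : ∀ i : ℕ, 1 ≤ i → i ≤ n →
      ((d * i : ℚ) : WithTop ℚ) ≤
        WithTop.map (Nat.cast : ℕ → ℚ)
          ((Multiset.map α (Finset.univ : Finset (Fin n)).val).esymm i).order) :
    ∀ i : Fin n, ((d : ℚ) : WithTop ℚ) ≤ WithTop.map (Nat.cast : ℕ → ℚ) (α i).order := by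
  intro i
  rw [WithTop.coe_le_map_natCast_iff]
  refine le_order_of_forall_isPrime fun p _ => ?_
  set s := Multiset.map α (Finset.univ : Finset (Fin n)).val
  refine natCeil_le_order_of_le_order_esymm (s := s.map (map (Ideal.Quotient.mk p)))
    (fun k hk hkn => ?_)
    (Multiset.mem_map_of_mem _ (Multiset.mem_map_of_mem _ (Finset.mem_univ i)))
  rw [Multiset.esymm_map_ringHom]
  refine (WithTop.coe_le_map_natCast_iff.mp (hord k hk ?_)).trans (le_order_map _)
  simpa [s] using hkn

/-- In a reduced commutative ring, if for a positive rational `d` the order of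
`σ_i(α₁, …, αₙ)` is at least `d·i` for all `1 ≤ i ≤ n`, then each `αᵢ` has order at
least `d`. Orders, valued in `ℕ∞`, are compared with rationals in `WithTop ℚ`. -/
theorem statement15 {R : Type*} [CommRing R] [IsReduced R]
    (n : ℕ) (α : Fin n → PowerSeries R) (d : ℚ) (hd : 0 < d)
    (hord : ∀ i : ℕ, 1 ≤ i → i ≤ n →
      ((d * i : ℚ) : WithTop ℚ) ≤
        WithTop.map (Nat.cast : ℕ → ℚ)
          ((Multiset.map α (Finset.univ : Finset (Fin n)).val).esymm i).order) :
    ∀ i : Fin n, ((d : ℚ) : WithTop ℚ) ≤ WithTop.map (Nat.cast : ℕ → ℚ) (α i).order :=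
  statement15_general n α d hord
end

section
/- Let R be a commutative ring, let A be a reduced commutative ring, and let φ : R → A be a ring homomorphism. Let F = Y^n + Σ_{i=1}^n C(α_i)·Y^{n−i} be a monic polynomial in (R[[X]])[Y] of degree n, and suppose there are a positive integer q, a natural number p, and F₁ ∈ (R[[T]])[Z] such that substituting X ↦ T^q in the coefficients of F and Y ↦ T^p·Z yields T^{np}·F₁(T,Z); that is, Σ_{i=0}^n σ_q(α_i)·T^{p(n−i)}·Z^{n−i} = T^{np}·F₁ in (R[[T]])[Z] (with α₀ = 1). If there exist a positive integer m and η₁, …, η_n ∈ A[[U]] such that the image of F obtained by applying φ coefficient-wise and then substituting X ↦ U^m equals ∏_{i=1}^n (Y − C(η_i)), then there exist c₁, …, c_n ∈ A such that the polynomial in A[Z] obtained from F₁ by sending each coefficient β ∈ R[[T]] to φ(constant coefficient of β) equals ∏_{i=1}^n (Z − C(c_i)). -/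
/-!
Let `ψ = σ_m ∘ φ` on power series and `k = m p`. Since `ψ` commutes with `σ_q` and sends `T` to
`U^m`, applying it to `F(T^q, T^p Z) = T^(np) F₁` shows that `P = ∏ (Y - σ_q ηᵢ)` satisfies
`P(U^k Y) = U^(nk) G` with `G = ψ F₁`. When `k > 0` this forces `P ≡ Yⁿ (mod U)`, so the constant
coefficients of the roots are nilpotent, hence zero as `A` is reduced. Dividing every root by `U`
gives the same identity with `k - 1`, so after `k` steps `G = ∏ (Y - ζᵢ)`, and taking constant
coefficients factors `F₁(0, Z)`.
-/

/-- The ring homomorphism `R[[X]] → R[[T]]` sending `Σ aᵢ Xⁱ` to `Σ aᵢ T^(m·i)`,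
i.e. coefficient-wise substitution of `T^m` for `X`. -/
noncomputable def PowerSeries.substPow (R : Type*) [CommRing R] (m : ℕ+) :
    PowerSeries R →+* PowerSeries R :=
  (HahnSeries.toPowerSeries (R := R)).toRingHom.comp
    ((HahnSeries.embDomainRingHom (AddMonoidHom.mulLeft (m : ℕ))
        (fun _ _ h => Nat.eq_of_mul_eq_mul_left m.pos h)
        (fun _ _ => mul_le_mul_iff_right₀ m.pos)).comp
      (HahnSeries.toPowerSeries (R := R)).symm.toRingHom)

namespace PowerSeries

variable {R S : Type*} [CommRing R] [CommRing S]

theorem coeff_substPow (m : ℕ+) (f : R⟦X⟧) (j : ℕ) :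
    coeff j (substPow R m f) = if (m : ℕ) ∣ j then coeff (j / m) f else 0 := by
  simp only [substPow, RingHom.comp_apply, RingEquiv.toRingHom_eq_coe, RingHom.coe_coe,
    HahnSeries.coeff_toPowerSeries]
  split_ifs with h
  · obtain ⟨c, rfl⟩ := h
    rw [Nat.mul_div_cancel_left c m.pos, ← HahnSeries.coeff_toPowerSeries_symm]
    exact HahnSeries.embDomain_coeff (a := c)
  · refine HahnSeries.embDomain_of_notMem_range ?_
    rintro ⟨c, hc⟩
    exact h ⟨c, hc.symm⟩

theorem substPow_mul (a b : ℕ+) (f : R⟦X⟧) :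
    substPow R (a * b) f = substPow R a (substPow R b f) := by
  ext j
  simp only [coeff_substPow]
  split_ifs with hab ha hb ha hb <;> push_cast at *
  · rw [Nat.div_div_eq_div_mul]
  · exact absurd ((Nat.dvd_div_iff_mul_dvd ha).2 hab) hb
  · exact absurd (dvd_of_mul_right_dvd hab) ha
  · exact absurd ((Nat.dvd_div_iff_mul_dvd ha).1 hb) hab
  all_goals rfl

theorem substPow_comm (a b : ℕ+) (f : R⟦X⟧) :
    substPow R a (substPow R b f) = substPow R b (substPow R a f) := by
  rw [← substPow_mul, ← substPow_mul, mul_comm]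

theorem substPow_X (m : ℕ+) : substPow R m X = X ^ (m : ℕ) := by
  ext j
  rw [coeff_substPow, coeff_X_pow]
  split_ifs with h hj hj
  · subst hj; simp
  · obtain ⟨c, rfl⟩ := h
    rw [Nat.mul_div_cancel_left c m.pos, coeff_X, if_neg]
    rintro rfl
    exact hj (mul_one _)
  · exact absurd (hj ▸ dvd_rfl) h
  · rfl

theorem map_substPow (φ : R →+* S) (m : ℕ+) (f : R⟦X⟧) :
    map φ (substPow R m f) = substPow S m (map φ f) := by
  ext j
  simp only [coeff_map, coeff_substPow, apply_ite φ, map_zero]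

theorem constantCoeff_map (φ : R →+* S) (f : R⟦X⟧) :
    constantCoeff (map φ f) = φ (constantCoeff f) := by
  rw [← coeff_zero_eq_constantCoeff_apply, coeff_map, coeff_zero_eq_constantCoeff_apply]

theorem constantCoeff_substPow (m : ℕ+) (f : R⟦X⟧) :
    constantCoeff (substPow R m f) = constantCoeff f := by
  rw [← coeff_zero_eq_constantCoeff_apply, coeff_substPow, if_pos (dvd_zero _), Nat.zero_div,
    coeff_zero_eq_constantCoeff_apply]

end PowerSeries

open Polynomial

section

variable {S : Type*} [CommRing S]

theorem X_pow_add_sum_comp_C_mul_X {n : ℕ} {a : ℕ → S} (ha : a 0 = 1) (s : S) :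
    (X ^ n + ∑ i ∈ Finset.Icc 1 n, C (a i) * X ^ (n - i)).comp (C s * X)
      = ∑ i ∈ Finset.range (n + 1), C (a i * s ^ (n - i)) * X ^ (n - i) := by
  rw [Finset.sum_range_eq_add_Ico _ (by omega : 0 < n + 1), Finset.Ico_add_one_right_eq_Icc]
  simp [ha, mul_pow, mul_assoc]

theorem prod_X_sub_C_mul_comp {ι : Type*} [Fintype ι] (s t : S) (u : ι → S) :
    (∏ l, (X - C (s * u l))).comp (C (s * t) * X)
      = C (s ^ Fintype.card ι) * (∏ l, (X - C (u l))).comp (C t * X) := by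
  simp only [prod_comp, sub_comp, X_comp, C_comp]
  rw [C_pow, ← Finset.card_univ, ← Finset.prod_const, ← Finset.prod_mul_distrib]
  refine Finset.prod_congr rfl fun l _ => ?_
  simp only [C_mul]
  ring

theorem map_constantCoeff_eq_X_pow_of_comp_eq {P G : (PowerSeries S)[X]} {n k : ℕ} (hk : 0 < k)
    (hP : P.Monic) (hdeg : P.natDegree = n)
    (h : P.comp (C (PowerSeries.X ^ k) * X) = C (PowerSeries.X ^ (n * k)) * G) :
    P.map PowerSeries.constantCoeff = X ^ n := by
  ext d
  rw [coeff_map, coeff_X_pow]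
  rcases lt_trichotomy d n with hd | rfl | hd
  · have hcoeff := congrArg (coeff · d) h
    simp only [comp_C_mul_X_coeff, coeff_C_mul, ← pow_mul] at hcoeff
    have hPd : P.coeff d = PowerSeries.X ^ (k * (n - d)) * G.coeff d := by
      apply PowerSeries.X_pow_mul_cancel (k := k * d)
      rw [mul_comm, hcoeff, ← mul_assoc, ← pow_add]
      congr 2
      rw [← mul_add, Nat.add_sub_cancel' hd.le, mul_comm]
    rw [hPd, if_neg hd.ne, map_mul, map_pow, PowerSeries.constantCoeff_X,
      zero_pow (Nat.mul_pos hk (Nat.sub_pos_of_lt hd)).ne', zero_mul]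
  · rw [← hdeg, hP.coeff_natDegree, map_one, if_pos rfl]
  · rw [coeff_eq_zero_of_natDegree_lt (hdeg ▸ hd), map_zero, if_neg hd.ne']

end

section

variable {A ι : Type*} [CommRing A] [IsReduced A] [Fintype ι]

theorem eq_zero_of_prod_X_sub_C_eq_X_pow {b : ι → A} (h : ∏ l, (X - C (b l)) = X ^ Fintype.card ι)
    (l : ι) : b l = 0 := by
  have hroot := congrArg (eval (b l)) h
  rw [eval_prod, Finset.prod_eq_zero (Finset.mem_univ l) (by simp), eval_pow, eval_X] at hroot
  exact IsReduced.eq_zero _ ⟨_, hroot.symm⟩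

theorem constantCoeff_eq_zero_of_prod_comp_eq {k : ℕ} (hk : 0 < k) {w : ι → PowerSeries A}
    {G : (PowerSeries A)[X]}
    (h : (∏ l, (X - C (w l))).comp (C (PowerSeries.X ^ k) * X)
      = C (PowerSeries.X ^ (Fintype.card ι * k)) * G) (l : ι) :
    PowerSeries.constantCoeff (w l) = 0 := by
  nontriviality A
  have hmap := map_constantCoeff_eq_X_pow_of_comp_eq hk (monic_prod_X_sub_C w Finset.univ)
    ((natDegree_finsetProd_X_sub_C_eq_card _ _).trans Finset.card_univ) h
  simp only [Polynomial.map_prod, Polynomial.map_sub, map_X, map_C] at hmap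
  exact eq_zero_of_prod_X_sub_C_eq_X_pow hmap l

theorem exists_eq_prod_X_sub_C_of_prod_comp_eq (k : ℕ) {w : ι → PowerSeries A}
    {G : (PowerSeries A)[X]}
    (h : (∏ l, (X - C (w l))).comp (C (PowerSeries.X ^ k) * X)
      = C (PowerSeries.X ^ (Fintype.card ι * k)) * G) :
    ∃ ζ : ι → PowerSeries A, G = ∏ l, (X - C (ζ l)) := by
  induction k generalizing w with
  | zero => exact ⟨w, by simpa using h.symm⟩
  | succ k ih =>
    choose u hu using fun l =>
      PowerSeries.X_dvd_iff.2 (constantCoeff_eq_zero_of_prod_comp_eq k.succ_pos h l)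
    refine ih (w := u) (IsSMulRegular.polynomial
      (IsLeftRegular.isSMulRegular (PowerSeries.X_pow_mul_injective (k := Fintype.card ι))) ?_)
    simp only [hu, pow_succ', prod_X_sub_C_mul_comp] at h
    dsimp only
    rw [smul_eq_C_mul, smul_eq_C_mul, h, ← mul_assoc, ← C_mul, ← pow_add, mul_add_one,
      add_comm]

end

/-- If `F = Y^n + Σ C(αᵢ)·Y^(n-i) ∈ (R[[X]])[Y]` satisfies
`F(T^q, T^p·Z) = T^(np)·F₁(T, Z)` and, after applying a ring homomorphism `φ : R → A` to a
reduced ring coefficient-wise and substituting `X ↦ U^m`, `F` factors linearly over `A[[U]]`,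
then `F₁(0, Z)` factors linearly over `A`. -/
theorem statement16 {R A : Type*} [CommRing R] [CommRing A] [IsReduced A]
    (φ : R →+* A) (n : ℕ) (α : ℕ → PowerSeries R) (hα0 : α 0 = 1)
    (F : Polynomial (PowerSeries R))
    (hF : F = X ^ n + ∑ i ∈ Finset.Icc 1 n, C (α i) * X ^ (n - i))
    (q : ℕ+) (p : ℕ) (F₁ : Polynomial (PowerSeries R))
    (hF₁ : ∑ i ∈ Finset.range (n + 1),
        C (PowerSeries.substPow R q (α i) * PowerSeries.X ^ (p * (n - i))) * X ^ (n - i)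
      = C (PowerSeries.X ^ (n * p)) * F₁)
    (m : ℕ+) (η : Fin n → PowerSeries A)
    (hfac : F.map ((PowerSeries.substPow A m).comp (PowerSeries.map φ))
      = ∏ i, (X - C (η i))) :
    ∃ c : Fin n → A,
      F₁.map (φ.comp (PowerSeries.constantCoeff (R := R))) = ∏ i, (X - C (c i)) := by
  set ψ := (PowerSeries.substPow A m).comp (PowerSeries.map φ) with hψ
  have hψ_X_pow (e : ℕ) : ψ (PowerSeries.X ^ e) = PowerSeries.X ^ ((m : ℕ) * e) := by
    simp [hψ, PowerSeries.substPow_X, pow_mul]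
  have hψ_substPow : ψ.comp (PowerSeries.substPow R q) = (PowerSeries.substPow A q).comp ψ :=
    RingHom.ext fun f => by simp [hψ, PowerSeries.map_substPow, PowerSeries.substPow_comm]
  have hψ_constantCoeff :
      PowerSeries.constantCoeff.comp ψ = φ.comp (PowerSeries.constantCoeff (R := R)) :=
    RingHom.ext fun f => by
      simp only [hψ, RingHom.comp_apply, PowerSeries.constantCoeff_substPow,
        PowerSeries.constantCoeff_map]
  have hscaled : (F.map (PowerSeries.substPow R q)).comp (C (PowerSeries.X ^ p) * X)
      = C (PowerSeries.X ^ (n * p)) * F₁ := by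
    rw [← hF₁, hF, Polynomial.map_add, Polynomial.map_sum]
    simp only [Polynomial.map_pow, Polynomial.map_mul, map_X, map_C]
    rw [X_pow_add_sum_comp_C_mul_X (a := fun i => PowerSeries.substPow R q (α i)) (by simp [hα0])]
    simp only [pow_mul]
  have hroots : (F.map (PowerSeries.substPow R q)).map ψ
      = ∏ i, (X - C (PowerSeries.substPow A q (η i))) := by
    rw [Polynomial.map_map, hψ_substPow, ← Polynomial.map_map, hfac, Polynomial.map_prod]
    simp
  have hG := congrArg (Polynomial.map ψ) hscaled
  rw [Polynomial.map_comp, hroots, Polynomial.map_mul, Polynomial.map_mul, map_C, map_C, map_X,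
    hψ_X_pow, hψ_X_pow, mul_left_comm] at hG
  obtain ⟨ζ, hζ⟩ := exists_eq_prod_X_sub_C_of_prod_comp_eq _ (by rwa [Fintype.card_fin])
  refine ⟨fun i => PowerSeries.constantCoeff (ζ i), ?_⟩
  rw [← hψ_constantCoeff, ← Polynomial.map_map, hζ, Polynomial.map_prod]
  simp
end
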